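/- arXiv:math/0601001 — 5 statements merged into one kernel-verified Lean document; each statement's English description precedes it below -/
import Mathlib

section
/- Let B_k → A_k (k = 1,…,n) be homomorphisms of finite-dimensional algebras over a field K, with each B_k separable, and let A = A₁ ⊗ ⋯ ⊗ A_n, B = B₁ ⊗ ⋯ ⊗ B_n. If each A_k over B_k is depth two, then A over B is depth two; quasibases for A over B are obtained as tensor products of quasibases of the factors. -/
set_option maxHeartbeats 1000000
set_option synthInstance.maxHeartbeats 400000


open TensorProduct LinearMap

noncomputable section

variable {K : Type*} [CommRing K] {A B : Type*} [Ring A] [Ring B] [Algebra K A] [Algebra K B]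

/-- Left multiplication by `a` on the first tensorand of `A ⊗[K] A`. -/
def lmulT (a : A) : A ⊗[K] A →ₗ[K] A ⊗[K] A := rTensor A (mulLeft K a)

/-- Right multiplication by `a` on the second tensorand of `A ⊗[K] A`. -/
def rmulT (a : A) : A ⊗[K] A →ₗ[K] A ⊗[K] A := lTensor A (mulRight K a)

/-- The relations defining `A ⊗_B A` as a quotient of `A ⊗[K] A`; working modulo
`relJ f` amounts to working in the tensor square `A ⊗_B A` of the extension `f`. -/
def relJ (f : B →ₐ[K] A) : Submodule K (A ⊗[K] A) :=
  Submodule.span K {z | ∃ x b y, z = (x * f b) ⊗ₜ[K] y - x ⊗ₜ[K] (f b * y)}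

/-- `α` is a `B`-`B`-bimodule endomorphism of `A`. -/
def IsBB (f : B →ₐ[K] A) (α : A →ₗ[K] A) : Prop :=
  (∀ b x, α (f b * x) = f b * α x) ∧ (∀ b x, α (x * f b) = α x * f b)

/-- `t` represents a `B`-central element of `A ⊗_B A`. -/
def IsCent (f : B →ₐ[K] A) (t : A ⊗[K] A) : Prop :=
  ∀ b, lmulT (K := K) (f b) t - rmulT (f b) t ∈ relJ f

/-- `A ⊗_B A` is isomorphic, as a `B`-`A`-bimodule, to a direct summand of `A^N`
for some positive `N`: there is a split mono `ι` (with splitting `π`), both maps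
being `B`-`A`-bimodule maps (everything taken modulo the relations `relJ f`). -/
def LeftD2 (f : B →ₐ[K] A) : Prop :=
  ∃ N : ℕ, 0 < N ∧ ∃ (ι : A ⊗[K] A →ₗ[K] (Fin N → A)) (π : (Fin N → A) →ₗ[K] A ⊗[K] A),
    (∀ z ∈ relJ f, ι z = 0) ∧
    (∀ b z, ι (lmulT (f b) z) = fun i => f b * ι z i) ∧
    (∀ a z, ι (rmulT a z) = fun i => ι z i * a) ∧
    (∀ b (v : Fin N → A), π (fun i => f b * v i) - lmulT (f b) (π v) ∈ relJ f) ∧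
    (∀ a (v : Fin N → A), π (fun i => v i * a) - rmulT a (π v) ∈ relJ f) ∧
    (∀ z, π (ι z) - z ∈ relJ f)

/-- `A ⊗_B A` is isomorphic, as an `A`-`B`-bimodule, to a direct summand of `A^N`. -/
def RightD2 (f : B →ₐ[K] A) : Prop :=
  ∃ N : ℕ, 0 < N ∧ ∃ (ι : A ⊗[K] A →ₗ[K] (Fin N → A)) (π : (Fin N → A) →ₗ[K] A ⊗[K] A),
    (∀ z ∈ relJ f, ι z = 0) ∧
    (∀ a z, ι (lmulT a z) = fun i => a * ι z i) ∧
    (∀ b z, ι (rmulT (f b) z) = fun i => ι z i * f b) ∧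
    (∀ a (v : Fin N → A), π (fun i => a * v i) - lmulT a (π v) ∈ relJ f) ∧
    (∀ b (v : Fin N → A), π (fun i => v i * f b) - rmulT (f b) (π v) ∈ relJ f) ∧
    (∀ z, π (ι z) - z ∈ relJ f)

/-- `A ⊗_B A` is isomorphic, as an `A`-`A`-bimodule, to a direct summand of `A^N`:
H-separability of the extension `f`. -/
def HSep (f : B →ₐ[K] A) : Prop :=
  ∃ N : ℕ, 0 < N ∧ ∃ (ι : A ⊗[K] A →ₗ[K] (Fin N → A)) (π : (Fin N → A) →ₗ[K] A ⊗[K] A),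
    (∀ z ∈ relJ f, ι z = 0) ∧
    (∀ a z, ι (lmulT a z) = fun i => a * ι z i) ∧
    (∀ a z, ι (rmulT a z) = fun i => ι z i * a) ∧
    (∀ a (v : Fin N → A), π (fun i => a * v i) - lmulT a (π v) ∈ relJ f) ∧
    (∀ a (v : Fin N → A), π (fun i => v i * a) - rmulT a (π v) ∈ relJ f) ∧
    (∀ z, π (ι z) - z ∈ relJ f)


/-- `B` is a separable `K`-algebra: it has a separability idempotent. -/
def IsSepAlg (K B : Type*) [CommRing K] [Ring B] [Algebra K B] : Prop :=
  ∃ e : B ⊗[K] B, (LinearMap.mul' K B) e = 1 ∧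
    ∀ b : B, ((b ⊗ₜ[K] (1 : B)) * e : B ⊗[K] B) = e * ((1 : B) ⊗ₜ[K] b)

/-- Right D2 quasibases for `f` (equivalent to `RightD2 f`):
`x ⊗_B y = Σ_j x γ_j(y) u_j` with `γ_j ∈ End(_B A _B)`, `u_j ∈ (A ⊗_B A)^B`. -/
def IsRightQB {K A B : Type*} [CommRing K] [Ring A] [Ring B] [Algebra K A] [Algebra K B]
    (f : B →ₐ[K] A) {ι : Type*} [Fintype ι] (γ : ι → (A →ₗ[K] A)) (u : ι → A ⊗[K] A) : Prop :=
  (∀ j, IsBB f (γ j)) ∧ (∀ j, IsCent f (u j)) ∧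
    ∀ x y : A, (∑ j, lmulT (x * γ j y) (u j)) - x ⊗ₜ[K] y ∈ relJ f

/-- Left D2 quasibases for `f` (equivalent to `LeftD2 f`). -/
def IsLeftQB {K A B : Type*} [CommRing K] [Ring A] [Ring B] [Algebra K A] [Algebra K B]
    (f : B →ₐ[K] A) {ι : Type*} [Fintype ι] (β : ι → (A →ₗ[K] A)) (t : ι → A ⊗[K] A) : Prop :=
  (∀ i, IsBB f (β i)) ∧ (∀ i, IsCent f (t i)) ∧
    ∀ x y : A, (∑ i, rmulT (β i x * y) (t i)) - x ⊗ₜ[K] y ∈ relJ f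

/-! ### Auxiliary lemmas -/

section BasicLemmas

variable {K : Type*} [CommRing K] {A B : Type*} [Ring A] [Ring B] [Algebra K A] [Algebra K B]

lemma lmulT_tmul (a x y : A) : lmulT (K := K) a (x ⊗ₜ[K] y) = (a * x) ⊗ₜ[K] y := rfl

lemma rmulT_tmul (a x y : A) : rmulT (K := K) a (x ⊗ₜ[K] y) = x ⊗ₜ[K] (y * a) := rfl

lemma lmulT_zero : lmulT (K := K) (0 : A) = 0 := by
  apply TensorProduct.ext'; intro x y
  simp [lmulT_tmul, TensorProduct.zero_tmul]

lemma rmulT_zero : rmulT (K := K) (0 : A) = 0 := by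
  apply TensorProduct.ext'; intro x y
  simp [rmulT_tmul, TensorProduct.tmul_zero]

lemma lmulT_add (a b : A) : lmulT (K := K) (a + b) = lmulT a + lmulT b := by
  apply TensorProduct.ext'; intro x y
  simp [lmulT_tmul, add_mul, TensorProduct.add_tmul]

lemma rmulT_add (a b : A) : rmulT (K := K) (a + b) = rmulT a + rmulT b := by
  apply TensorProduct.ext'; intro x y
  simp [rmulT_tmul, mul_add, TensorProduct.tmul_add]

lemma lmulT_one : lmulT (K := K) (1 : A) = LinearMap.id := by
  apply TensorProduct.ext'; intro x y
  simp [lmulT_tmul]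

lemma rmulT_one : rmulT (K := K) (1 : A) = LinearMap.id := by
  apply TensorProduct.ext'; intro x y
  simp [rmulT_tmul]

lemma lmulT_mul (a b : A) : lmulT (K := K) (a * b) = lmulT a ∘ₗ lmulT b := by
  apply TensorProduct.ext'; intro x y
  simp [lmulT_tmul, mul_assoc]

lemma rmulT_mul (a b : A) : rmulT (K := K) (a * b) = rmulT b ∘ₗ rmulT a := by
  apply TensorProduct.ext'; intro x y
  simp [rmulT_tmul, mul_assoc]

lemma lmulT_rmulT (a b : A) (z : A ⊗[K] A) :
    lmulT a (rmulT b z) = rmulT b (lmulT a z) := by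
  induction z using TensorProduct.induction_on with
  | zero => simp
  | tmul x y => simp [lmulT_tmul, rmulT_tmul]
  | add u v hu hv => simp [map_add, hu, hv]

lemma mem_relJ_gen (f : B →ₐ[K] A) (x : A) (b : B) (y : A) :
    (x * f b) ⊗ₜ[K] y - x ⊗ₜ[K] (f b * y) ∈ relJ f :=
  Submodule.subset_span ⟨x, b, y, rfl⟩

/-- To land in a submodule after applying a linear map, it suffices to check generators. -/
lemma relJ_le_comap {W : Type*} [AddCommGroup W] [Module K W] (f : B →ₐ[K] A)
    (L : A ⊗[K] A →ₗ[K] W) (J : Submodule K W)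
    (h : ∀ x b y, L ((x * f b) ⊗ₜ[K] y - x ⊗ₜ[K] (f b * y)) ∈ J) :
    ∀ z ∈ relJ f, L z ∈ J := by
  intro z hz
  have hle : relJ f ≤ J.comap L :=
    Submodule.span_le.mpr (by rintro _ ⟨x, b, y, rfl⟩; exact h x b y)
  exact hle hz

lemma lmulT_mem_relJ (f : B →ₐ[K] A) (a : A) {z : A ⊗[K] A} (hz : z ∈ relJ f) :
    lmulT a z ∈ relJ f := by
  refine relJ_le_comap f (lmulT a) (relJ f) (fun x b y => ?_) z hz
  have h := mem_relJ_gen f (a * x) b y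
  simpa [lmulT_tmul, mul_assoc] using h

lemma rmulT_mem_relJ (f : B →ₐ[K] A) (a : A) {z : A ⊗[K] A} (hz : z ∈ relJ f) :
    rmulT a z ∈ relJ f := by
  refine relJ_le_comap f (rmulT a) (relJ f) (fun x b y => ?_) z hz
  have h := mem_relJ_gen f x b (y * a)
  simpa [rmulT_tmul, mul_assoc] using h

end BasicLemmas

section TwoAlgebras

variable {K : Type*} [CommRing K]
variable {A₁ A₂ B₁ B₂ : Type*} [Ring A₁] [Ring A₂] [Ring B₁] [Ring B₂]
  [Algebra K A₁] [Algebra K A₂] [Algebra K B₁] [Algebra K B₂]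

/-- The mixing equivalence. -/
abbrev mixE (K A₁ A₂ : Type*) [CommRing K] [Ring A₁] [Ring A₂]
    [Algebra K A₁] [Algebra K A₂] :
    ((A₁ ⊗[K] A₁) ⊗[K] (A₂ ⊗[K] A₂)) ≃ₗ[K] ((A₁ ⊗[K] A₂) ⊗[K] (A₁ ⊗[K] A₂)) :=
  TensorProduct.tensorTensorTensorComm K A₁ A₁ A₂ A₂

lemma mixE_tmul (a b : A₁) (c d : A₂) :
    mixE K A₁ A₂ ((a ⊗ₜ[K] b) ⊗ₜ[K] (c ⊗ₜ[K] d)) = (a ⊗ₜ[K] c) ⊗ₜ[K] (b ⊗ₜ[K] d) := rfl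

lemma mixE_symm_tmul (a : A₁) (c : A₂) (b : A₁) (d : A₂) :
    (mixE K A₁ A₂).symm ((a ⊗ₜ[K] c) ⊗ₜ[K] (b ⊗ₜ[K] d)) = (a ⊗ₜ[K] b) ⊗ₜ[K] (c ⊗ₜ[K] d) := by
  rw [TensorProduct.tensorTensorTensorComm_symm]
  rfl

variable (f₁ : B₁ →ₐ[K] A₁) (f₂ : B₂ →ₐ[K] A₂)

lemma mix_map_lmulT (a₁ : A₁) (a₂ : A₂) (w : (A₁ ⊗[K] A₁) ⊗[K] (A₂ ⊗[K] A₂)) :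
    mixE K A₁ A₂ (TensorProduct.map (lmulT a₁) (lmulT a₂) w)
      = lmulT (a₁ ⊗ₜ[K] a₂) (mixE K A₁ A₂ w) := by
  have h : (mixE K A₁ A₂).toLinearMap ∘ₗ TensorProduct.map (lmulT a₁) (lmulT a₂)
      = lmulT (a₁ ⊗ₜ[K] a₂) ∘ₗ (mixE K A₁ A₂).toLinearMap := by
    apply TensorProduct.ext_fourfold'
    intro x₁ y₁ x₂ y₂
    simp [mixE_tmul, lmulT_tmul, Algebra.TensorProduct.tmul_mul_tmul]
  exact LinearMap.congr_fun h w

lemma mix_map_rmulT (a₁ : A₁) (a₂ : A₂) (w : (A₁ ⊗[K] A₁) ⊗[K] (A₂ ⊗[K] A₂)) :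
    mixE K A₁ A₂ (TensorProduct.map (rmulT a₁) (rmulT a₂) w)
      = rmulT (a₁ ⊗ₜ[K] a₂) (mixE K A₁ A₂ w) := by
  have h : (mixE K A₁ A₂).toLinearMap ∘ₗ TensorProduct.map (rmulT a₁) (rmulT a₂)
      = rmulT (a₁ ⊗ₜ[K] a₂) ∘ₗ (mixE K A₁ A₂).toLinearMap := by
    apply TensorProduct.ext_fourfold'
    intro x₁ y₁ x₂ y₂
    simp [mixE_tmul, rmulT_tmul, Algebra.TensorProduct.tmul_mul_tmul]
  exact LinearMap.congr_fun h w

lemma mixSymm_lmulT (a₁ : A₁) (a₂ : A₂) (z : (A₁ ⊗[K] A₂) ⊗[K] (A₁ ⊗[K] A₂)) :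
    (mixE K A₁ A₂).symm (lmulT (a₁ ⊗ₜ[K] a₂) z)
      = TensorProduct.map (lmulT a₁) (lmulT a₂) ((mixE K A₁ A₂).symm z) := by
  apply (mixE K A₁ A₂).injective
  rw [mix_map_lmulT, LinearEquiv.apply_symm_apply, LinearEquiv.apply_symm_apply]

lemma mixSymm_rmulT (a₁ : A₁) (a₂ : A₂) (z : (A₁ ⊗[K] A₂) ⊗[K] (A₁ ⊗[K] A₂)) :
    (mixE K A₁ A₂).symm (rmulT (a₁ ⊗ₜ[K] a₂) z)
      = TensorProduct.map (rmulT a₁) (rmulT a₂) ((mixE K A₁ A₂).symm z) := by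
  apply (mixE K A₁ A₂).injective
  rw [mix_map_rmulT, LinearEquiv.apply_symm_apply, LinearEquiv.apply_symm_apply]

lemma mixJ₁ {j : A₁ ⊗[K] A₁} (hj : j ∈ relJ f₁) (z : A₂ ⊗[K] A₂) :
    mixE K A₁ A₂ (j ⊗ₜ[K] z) ∈ relJ (Algebra.TensorProduct.map f₁ f₂) := by
  have gen : ∀ (x : A₁) (b : B₁) (y : A₁) (z : A₂ ⊗[K] A₂),
      mixE K A₁ A₂ (((x * f₁ b) ⊗ₜ[K] y - x ⊗ₜ[K] (f₁ b * y)) ⊗ₜ[K] z)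
        ∈ relJ (Algebra.TensorProduct.map f₁ f₂) := by
    intro x b y z
    induction z using TensorProduct.induction_on with
    | zero => simp
    | tmul x₂ y₂ =>
        have h := mem_relJ_gen (Algebra.TensorProduct.map f₁ f₂)
          (x ⊗ₜ[K] x₂) (b ⊗ₜ[K] (1 : B₂)) (y ⊗ₜ[K] y₂)
        simpa [TensorProduct.sub_tmul, mixE_tmul,
          Algebra.TensorProduct.tmul_mul_tmul] using h
    | add u v hu hv =>
        rw [TensorProduct.tmul_add, map_add]
        exact add_mem hu hv
  exact relJ_le_comap f₁
    ((mixE K A₁ A₂).toLinearMap ∘ₗ (TensorProduct.mk K (A₁ ⊗[K] A₁) (A₂ ⊗[K] A₂)).flip z)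
    (relJ (Algebra.TensorProduct.map f₁ f₂))
    (fun x b y => by simpa [TensorProduct.sub_tmul, map_sub] using gen x b y z) j hj

lemma mixJ₂ (z : A₁ ⊗[K] A₁) {j : A₂ ⊗[K] A₂} (hj : j ∈ relJ f₂) :
    mixE K A₁ A₂ (z ⊗ₜ[K] j) ∈ relJ (Algebra.TensorProduct.map f₁ f₂) := by
  have gen : ∀ (x : A₂) (b : B₂) (y : A₂) (z : A₁ ⊗[K] A₁),
      mixE K A₁ A₂ (z ⊗ₜ[K] ((x * f₂ b) ⊗ₜ[K] y - x ⊗ₜ[K] (f₂ b * y)))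
        ∈ relJ (Algebra.TensorProduct.map f₁ f₂) := by
    intro x b y z
    induction z using TensorProduct.induction_on with
    | zero => simp
    | tmul x₁ y₁ =>
        have h := mem_relJ_gen (Algebra.TensorProduct.map f₁ f₂)
          (x₁ ⊗ₜ[K] x) ((1 : B₁) ⊗ₜ[K] b) (y₁ ⊗ₜ[K] y)
        simpa [TensorProduct.tmul_sub, mixE_tmul,
          Algebra.TensorProduct.tmul_mul_tmul] using h
    | add u v hu hv =>
        rw [TensorProduct.add_tmul, map_add]
        exact add_mem hu hv
  exact relJ_le_comap f₂
    ((mixE K A₁ A₂).toLinearMap ∘ₗ (TensorProduct.mk K (A₁ ⊗[K] A₁) (A₂ ⊗[K] A₂)) z)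
    (relJ (Algebra.TensorProduct.map f₁ f₂))
    (fun x b y => by simpa [TensorProduct.tmul_sub, map_sub] using gen x b y z) j hj

/-- Decomposition of the relations of the tensor extension into the two factors. -/
lemma relJ_decomp {W : Type*} [AddCommGroup W] [Module K W]
    (L : (A₁ ⊗[K] A₁) ⊗[K] (A₂ ⊗[K] A₂) →ₗ[K] W) (J : Submodule K W)
    (h₁ : ∀ {j : A₁ ⊗[K] A₁}, j ∈ relJ f₁ → ∀ z : A₂ ⊗[K] A₂, L (j ⊗ₜ[K] z) ∈ J)
    (h₂ : ∀ (z : A₁ ⊗[K] A₁) {j : A₂ ⊗[K] A₂}, j ∈ relJ f₂ → L (z ⊗ₜ[K] j) ∈ J) :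
    ∀ z ∈ relJ (Algebra.TensorProduct.map f₁ f₂), L ((mixE K A₁ A₂).symm z) ∈ J := by
  have hgen : ∀ (b : B₁ ⊗[K] B₂) (X Y : A₁ ⊗[K] A₂),
      L ((mixE K A₁ A₂).symm ((X * (Algebra.TensorProduct.map f₁ f₂) b) ⊗ₜ[K] Y
        - X ⊗ₜ[K] ((Algebra.TensorProduct.map f₁ f₂) b * Y))) ∈ J := by
    intro b
    induction b using TensorProduct.induction_on with
    | zero => intro X Y; simp
    | add b b' hb hb' =>
        intro X Y
        have e : (X * (Algebra.TensorProduct.map f₁ f₂) (b + b')) ⊗ₜ[K] Y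
            - X ⊗ₜ[K] ((Algebra.TensorProduct.map f₁ f₂) (b + b') * Y)
            = ((X * (Algebra.TensorProduct.map f₁ f₂) b) ⊗ₜ[K] Y
                - X ⊗ₜ[K] ((Algebra.TensorProduct.map f₁ f₂) b * Y))
              + ((X * (Algebra.TensorProduct.map f₁ f₂) b') ⊗ₜ[K] Y
                - X ⊗ₜ[K] ((Algebra.TensorProduct.map f₁ f₂) b' * Y)) := by
          rw [map_add, mul_add, add_mul, TensorProduct.add_tmul, TensorProduct.tmul_add]
          abel
        rw [e, map_add, map_add]
        exact add_mem (hb X Y) (hb' X Y)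
    | tmul b₁ b₂ =>
        intro X Y
        induction X using TensorProduct.induction_on with
        | zero => simp
        | add X X' hX hX' =>
            have e : ((X + X') * (Algebra.TensorProduct.map f₁ f₂) (b₁ ⊗ₜ[K] b₂)) ⊗ₜ[K] Y
                - (X + X') ⊗ₜ[K] ((Algebra.TensorProduct.map f₁ f₂) (b₁ ⊗ₜ[K] b₂) * Y)
                = ((X * (Algebra.TensorProduct.map f₁ f₂) (b₁ ⊗ₜ[K] b₂)) ⊗ₜ[K] Y
                    - X ⊗ₜ[K] ((Algebra.TensorProduct.map f₁ f₂) (b₁ ⊗ₜ[K] b₂) * Y))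
                  + ((X' * (Algebra.TensorProduct.map f₁ f₂) (b₁ ⊗ₜ[K] b₂)) ⊗ₜ[K] Y
                    - X' ⊗ₜ[K] ((Algebra.TensorProduct.map f₁ f₂) (b₁ ⊗ₜ[K] b₂) * Y)) := by
              rw [add_mul, TensorProduct.add_tmul, TensorProduct.add_tmul]
              abel
            rw [e, map_add, map_add]
            exact add_mem hX hX'
        | tmul x₁ x₂ =>
            induction Y using TensorProduct.induction_on with
            | zero => simp
            | add Y Y' hY hY' =>
                have e : ((x₁ ⊗ₜ[K] x₂) * (Algebra.TensorProduct.map f₁ f₂) (b₁ ⊗ₜ[K] b₂)) ⊗ₜ[K] (Y + Y')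
                    - (x₁ ⊗ₜ[K] x₂) ⊗ₜ[K] ((Algebra.TensorProduct.map f₁ f₂) (b₁ ⊗ₜ[K] b₂) * (Y + Y'))
                    = (((x₁ ⊗ₜ[K] x₂) * (Algebra.TensorProduct.map f₁ f₂) (b₁ ⊗ₜ[K] b₂)) ⊗ₜ[K] Y
                        - (x₁ ⊗ₜ[K] x₂) ⊗ₜ[K] ((Algebra.TensorProduct.map f₁ f₂) (b₁ ⊗ₜ[K] b₂) * Y))
                      + (((x₁ ⊗ₜ[K] x₂) * (Algebra.TensorProduct.map f₁ f₂) (b₁ ⊗ₜ[K] b₂)) ⊗ₜ[K] Y'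
                        - (x₁ ⊗ₜ[K] x₂) ⊗ₜ[K] ((Algebra.TensorProduct.map f₁ f₂) (b₁ ⊗ₜ[K] b₂) * Y')) := by
                  rw [mul_add, TensorProduct.tmul_add, TensorProduct.tmul_add]
                  abel
                rw [e, map_add, map_add]
                exact add_mem hY hY'
            | tmul y₁ y₂ =>
                have key : L (((x₁ * f₁ b₁) ⊗ₜ[K] y₁ - x₁ ⊗ₜ[K] (f₁ b₁ * y₁))
                      ⊗ₜ[K] ((x₂ * f₂ b₂) ⊗ₜ[K] y₂))
                    + L ((x₁ ⊗ₜ[K] (f₁ b₁ * y₁))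
                      ⊗ₜ[K] ((x₂ * f₂ b₂) ⊗ₜ[K] y₂ - x₂ ⊗ₜ[K] (f₂ b₂ * y₂))) ∈ J :=
                  add_mem (h₁ (mem_relJ_gen f₁ x₁ b₁ y₁) _) (h₂ _ (mem_relJ_gen f₂ x₂ b₂ y₂))
                have e : (mixE K A₁ A₂).symm
                      (((x₁ ⊗ₜ[K] x₂) * (Algebra.TensorProduct.map f₁ f₂) (b₁ ⊗ₜ[K] b₂)) ⊗ₜ[K] (y₁ ⊗ₜ[K] y₂)
                      - (x₁ ⊗ₜ[K] x₂) ⊗ₜ[K] ((Algebra.TensorProduct.map f₁ f₂) (b₁ ⊗ₜ[K] b₂) * (y₁ ⊗ₜ[K] y₂)))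
                    = ((x₁ * f₁ b₁) ⊗ₜ[K] y₁ - x₁ ⊗ₜ[K] (f₁ b₁ * y₁))
                        ⊗ₜ[K] ((x₂ * f₂ b₂) ⊗ₜ[K] y₂)
                      + (x₁ ⊗ₜ[K] (f₁ b₁ * y₁))
                        ⊗ₜ[K] ((x₂ * f₂ b₂) ⊗ₜ[K] y₂ - x₂ ⊗ₜ[K] (f₂ b₂ * y₂)) := by
                  rw [map_sub]
                  simp only [Algebra.TensorProduct.map_tmul,
                    Algebra.TensorProduct.tmul_mul_tmul, mixE_symm_tmul,
                    TensorProduct.sub_tmul, TensorProduct.tmul_sub]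
                  abel
                rw [e, map_add]
                exact key
  intro z hz
  have := relJ_le_comap (Algebra.TensorProduct.map f₁ f₂)
    (L ∘ₗ ((mixE K A₁ A₂).symm : _ ≃ₗ[K] _).toLinearMap) J
    (fun X b Y => by simpa using hgen b X Y) z hz
  simpa using this

end TwoAlgebras

section PiTensor

variable {K : Type*} [CommRing K]
variable {A₁ A₂ : Type*} [Ring A₁] [Ring A₂] [Algebra K A₁] [Algebra K A₂]

/-- Tensor product of function modules into functions of tensors, forward map. -/
def phiMap (K : Type*) (A₁ A₂ : Type*) [CommRing K] [Ring A₁] [Ring A₂]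
    [Algebra K A₁] [Algebra K A₂] (N M : ℕ) :
    ((Fin N → A₁) ⊗[K] (Fin M → A₂)) →ₗ[K] (Fin N × Fin M → A₁ ⊗[K] A₂) :=
  TensorProduct.lift (LinearMap.mk₂ K (fun v w p => v p.1 ⊗ₜ[K] w p.2)
    (fun v v' w => by funext p; simp [TensorProduct.add_tmul])
    (fun k v w => by funext p; simp [TensorProduct.smul_tmul'])
    (fun v w w' => by funext p; simp [TensorProduct.tmul_add])
    (fun k v w => by funext p; simp [TensorProduct.tmul_smul]))

lemma phiMap_tmul {N M : ℕ} (v : Fin N → A₁) (w : Fin M → A₂) :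
    phiMap K A₁ A₂ N M (v ⊗ₜ[K] w) = fun p => v p.1 ⊗ₜ[K] w p.2 := rfl

/-- Tensor product of function modules into functions of tensors, backward map. -/
def psiMap (K : Type*) (A₁ A₂ : Type*) [CommRing K] [Ring A₁] [Ring A₂]
    [Algebra K A₁] [Algebra K A₂] (N M : ℕ) :
    (Fin N × Fin M → A₁ ⊗[K] A₂) →ₗ[K] ((Fin N → A₁) ⊗[K] (Fin M → A₂)) :=
  ∑ p : Fin N × Fin M,
    (TensorProduct.map (LinearMap.single K (fun _ : Fin N => A₁) p.1)
      (LinearMap.single K (fun _ : Fin M => A₂) p.2)) ∘ₗ (LinearMap.proj p)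

lemma psiMap_single {N M : ℕ} (p : Fin N × Fin M) (t : A₁ ⊗[K] A₂) :
    psiMap K A₁ A₂ N M (Pi.single p t)
      = TensorProduct.map (LinearMap.single K (fun _ : Fin N => A₁) p.1)
          (LinearMap.single K (fun _ : Fin M => A₂) p.2) t := by
  rw [psiMap, LinearMap.sum_apply]
  rw [Finset.sum_eq_single p]
  · simp
  · intro q _ hq
    simp [LinearMap.proj_apply, Pi.single_eq_of_ne hq]
  · intro h; exact absurd (Finset.mem_univ p) h

lemma psiMap_single_tmul {N M : ℕ} (p : Fin N × Fin M) (a₁ : A₁) (a₂ : A₂) :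
    psiMap K A₁ A₂ N M (Pi.single p (a₁ ⊗ₜ[K] a₂))
      = (Pi.single p.1 a₁) ⊗ₜ[K] (Pi.single p.2 a₂) := by
  rw [psiMap_single, TensorProduct.map_tmul]
  rfl

lemma psi_phi {N M : ℕ} (t : (Fin N → A₁) ⊗[K] (Fin M → A₂)) :
    psiMap K A₁ A₂ N M (phiMap K A₁ A₂ N M t) = t := by
  induction t using TensorProduct.induction_on with
  | zero => simp
  | add u v hu hv => rw [map_add, map_add, hu, hv]
  | tmul v w =>
      rw [phiMap_tmul]
      calc psiMap K A₁ A₂ N M (fun p => v p.1 ⊗ₜ[K] w p.2)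
          = ∑ p : Fin N × Fin M, (Pi.single p.1 (v p.1)) ⊗ₜ[K] (Pi.single p.2 (w p.2)) := by
            rw [psiMap, LinearMap.sum_apply]
            refine Finset.sum_congr rfl (fun p _ => ?_)
            simp [LinearMap.proj_apply, TensorProduct.map_tmul, LinearMap.single_apply]
        _ = ∑ i : Fin N, ∑ j : Fin M, (Pi.single i (v i)) ⊗ₜ[K] (Pi.single j (w j)) := by
            rw [← Finset.univ_product_univ, Finset.sum_product]
        _ = (∑ i : Fin N, Pi.single i (v i)) ⊗ₜ[K] (∑ j : Fin M, Pi.single j (w j)) := by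
            rw [TensorProduct.sum_tmul]
            exact Finset.sum_congr rfl (fun i _ => by rw [TensorProduct.tmul_sum])
        _ = v ⊗ₜ[K] w := by rw [Finset.univ_sum_single, Finset.univ_sum_single]

lemma pi_single_mul {I : Type*} [DecidableEq I] {A : Type*} [Ring A] (p : I) (c a : A) :
    Pi.single p (c * a) = fun i => c * (Pi.single p a : I → A) i := by
  funext i
  simp [Pi.single_apply, mul_ite, mul_zero]

lemma pi_single_mul_right {I : Type*} [DecidableEq I] {A : Type*} [Ring A] (p : I) (c a : A) :
    Pi.single p (a * c) = fun i => (Pi.single p a : I → A) i * c := by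
  funext i
  simp [Pi.single_apply, ite_mul, zero_mul]

end PiTensor

section CoreD2

variable {K : Type*} [CommRing K]
variable {A₁ A₂ B₁ B₂ : Type*} [Ring A₁] [Ring A₂] [Ring B₁] [Ring B₂]
  [Algebra K A₁] [Algebra K A₂] [Algebra K B₁] [Algebra K B₂]
variable (f₁ : B₁ →ₐ[K] A₁) (f₂ : B₂ →ₐ[K] A₂)

lemma Phi_lmul {N M : ℕ} (ι₁ : A₁ ⊗[K] A₁ →ₗ[K] (Fin N → A₁))
    (ι₂ : A₂ ⊗[K] A₂ →ₗ[K] (Fin M → A₂)) (c₁ : A₁) (c₂ : A₂)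
    (h₁ : ∀ z, ι₁ (lmulT c₁ z) = fun i => c₁ * ι₁ z i)
    (h₂ : ∀ z, ι₂ (lmulT c₂ z) = fun i => c₂ * ι₂ z i)
    (z : (A₁ ⊗[K] A₂) ⊗[K] (A₁ ⊗[K] A₂)) :
    phiMap K A₁ A₂ N M (TensorProduct.map ι₁ ι₂ ((mixE K A₁ A₂).symm (lmulT (c₁ ⊗ₜ[K] c₂) z)))
      = fun p => (c₁ ⊗ₜ[K] c₂) * phiMap K A₁ A₂ N M
          (TensorProduct.map ι₁ ι₂ ((mixE K A₁ A₂).symm z)) p := by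
  rw [mixSymm_lmulT]
  generalize (mixE K A₁ A₂).symm z = w
  induction w using TensorProduct.induction_on with
  | zero => funext p; simp
  | tmul u v =>
      rw [TensorProduct.map_tmul, TensorProduct.map_tmul, TensorProduct.map_tmul,
        h₁, h₂, phiMap_tmul, phiMap_tmul]
      funext p
      simp [Algebra.TensorProduct.tmul_mul_tmul]
  | add u v hu hv =>
      simp only [map_add]
      funext p
      simp only [Pi.add_apply, congrFun hu p, congrFun hv p, mul_add]

lemma Phi_rmul {N M : ℕ} (ι₁ : A₁ ⊗[K] A₁ →ₗ[K] (Fin N → A₁))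
    (ι₂ : A₂ ⊗[K] A₂ →ₗ[K] (Fin M → A₂)) (c₁ : A₁) (c₂ : A₂)
    (h₁ : ∀ z, ι₁ (rmulT c₁ z) = fun i => ι₁ z i * c₁)
    (h₂ : ∀ z, ι₂ (rmulT c₂ z) = fun i => ι₂ z i * c₂)
    (z : (A₁ ⊗[K] A₂) ⊗[K] (A₁ ⊗[K] A₂)) :
    phiMap K A₁ A₂ N M (TensorProduct.map ι₁ ι₂ ((mixE K A₁ A₂).symm (rmulT (c₁ ⊗ₜ[K] c₂) z)))
      = fun p => phiMap K A₁ A₂ N M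
          (TensorProduct.map ι₁ ι₂ ((mixE K A₁ A₂).symm z)) p * (c₁ ⊗ₜ[K] c₂) := by
  rw [mixSymm_rmulT]
  generalize (mixE K A₁ A₂).symm z = w
  induction w using TensorProduct.induction_on with
  | zero => funext p; simp
  | tmul u v =>
      rw [TensorProduct.map_tmul, TensorProduct.map_tmul, TensorProduct.map_tmul,
        h₁, h₂, phiMap_tmul, phiMap_tmul]
      funext p
      simp [Algebra.TensorProduct.tmul_mul_tmul]
  | add u v hu hv =>
      simp only [map_add]
      funext p
      simp only [Pi.add_apply, congrFun hu p, congrFun hv p, add_mul]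

lemma Pi_lmul {N M : ℕ} (π₁ : (Fin N → A₁) →ₗ[K] A₁ ⊗[K] A₁)
    (π₂ : (Fin M → A₂) →ₗ[K] A₂ ⊗[K] A₂) (c₁ : A₁) (c₂ : A₂)
    (h₁ : ∀ v, π₁ (fun i => c₁ * v i) - lmulT c₁ (π₁ v) ∈ relJ f₁)
    (h₂ : ∀ v, π₂ (fun i => c₂ * v i) - lmulT c₂ (π₂ v) ∈ relJ f₂)
    (w : Fin N × Fin M → A₁ ⊗[K] A₂) :
    mixE K A₁ A₂ (TensorProduct.map π₁ π₂ (psiMap K A₁ A₂ N M (fun p => (c₁ ⊗ₜ[K] c₂) * w p)))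
      - lmulT (c₁ ⊗ₜ[K] c₂) (mixE K A₁ A₂ (TensorProduct.map π₁ π₂ (psiMap K A₁ A₂ N M w)))
      ∈ relJ (Algebra.TensorProduct.map f₁ f₂) := by
  classical
  -- single case
  have hsingle : ∀ (p : Fin N × Fin M) (t : A₁ ⊗[K] A₂),
      mixE K A₁ A₂ (TensorProduct.map π₁ π₂
          (psiMap K A₁ A₂ N M (Pi.single p ((c₁ ⊗ₜ[K] c₂) * t))))
        - lmulT (c₁ ⊗ₜ[K] c₂) (mixE K A₁ A₂ (TensorProduct.map π₁ π₂
          (psiMap K A₁ A₂ N M (Pi.single p t))))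
        ∈ relJ (Algebra.TensorProduct.map f₁ f₂) := by
    intro p t
    induction t using TensorProduct.induction_on with
    | zero => simp
    | add t t' ht ht' =>
        have e : (Pi.single p ((c₁ ⊗ₜ[K] c₂) * (t + t'))) =
            (Pi.single p ((c₁ ⊗ₜ[K] c₂) * t) : Fin N × Fin M → A₁ ⊗[K] A₂)
              + Pi.single p ((c₁ ⊗ₜ[K] c₂) * t') := by
          rw [mul_add]; exact Pi.single_add p _ _
        have e2 : (Pi.single p (t + t') : Fin N × Fin M → A₁ ⊗[K] A₂)
            = Pi.single p t + Pi.single p t' := Pi.single_add p _ _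
        rw [e, e2]
        simp only [map_add]
        have := add_mem ht ht'
        convert this using 1
        abel
    | tmul a₁ a₂ =>
        have hψ1 : psiMap K A₁ A₂ N M (Pi.single p ((c₁ ⊗ₜ[K] c₂) * (a₁ ⊗ₜ[K] a₂)))
            = (Pi.single p.1 (c₁ * a₁)) ⊗ₜ[K] (Pi.single p.2 (c₂ * a₂)) := by
          rw [Algebra.TensorProduct.tmul_mul_tmul, psiMap_single_tmul]
        rw [hψ1, psiMap_single_tmul, pi_single_mul p.1 c₁ a₁, pi_single_mul p.2 c₂ a₂]
        set X : Fin N → A₁ := Pi.single p.1 a₁ with hX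
        set Y : Fin M → A₂ := Pi.single p.2 a₂ with hY
        have hjA := h₁ X
        have hjB := h₂ Y
        set jA := π₁ (fun i => c₁ * X i) - lmulT c₁ (π₁ X) with hjAdef
        set jB := π₂ (fun i => c₂ * Y i) - lmulT c₂ (π₂ Y) with hjBdef
        have expand : (π₁ fun i => c₁ * X i) ⊗ₜ[K] (π₂ fun i => c₂ * Y i)
            = (lmulT c₁ (π₁ X)) ⊗ₜ[K] (lmulT c₂ (π₂ Y))
              + ((lmulT c₁ (π₁ X)) ⊗ₜ[K] jB
                + (jA ⊗ₜ[K] (lmulT c₂ (π₂ Y)) + jA ⊗ₜ[K] jB)) := by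
          have eA : (π₁ fun i => c₁ * X i) = lmulT c₁ (π₁ X) + jA := by
            rw [hjAdef]; abel
          have eB : (π₂ fun i => c₂ * Y i) = lmulT c₂ (π₂ Y) + jB := by
            rw [hjBdef]; abel
          rw [eA, eB, TensorProduct.add_tmul, TensorProduct.tmul_add,
            TensorProduct.tmul_add]
          abel
        rw [TensorProduct.map_tmul, TensorProduct.map_tmul, expand]
        have hmm : mixE K A₁ A₂ ((lmulT c₁ (π₁ X)) ⊗ₜ[K] (lmulT c₂ (π₂ Y)))
            = lmulT (c₁ ⊗ₜ[K] c₂) (mixE K A₁ A₂ ((π₁ X) ⊗ₜ[K] (π₂ Y))) := by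
          rw [← mix_map_lmulT, TensorProduct.map_tmul]
        rw [map_add, hmm]
        have goal_eq : lmulT (c₁ ⊗ₜ[K] c₂) (mixE K A₁ A₂ ((π₁ X) ⊗ₜ[K] (π₂ Y)))
              + mixE K A₁ A₂ ((lmulT c₁ (π₁ X)) ⊗ₜ[K] jB
                + (jA ⊗ₜ[K] (lmulT c₂ (π₂ Y)) + jA ⊗ₜ[K] jB))
              - lmulT (c₁ ⊗ₜ[K] c₂) (mixE K A₁ A₂ ((π₁ X) ⊗ₜ[K] (π₂ Y)))
            = mixE K A₁ A₂ ((lmulT c₁ (π₁ X)) ⊗ₜ[K] jB)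
              + (mixE K A₁ A₂ (jA ⊗ₜ[K] (lmulT c₂ (π₂ Y)))
                + mixE K A₁ A₂ (jA ⊗ₜ[K] jB)) := by
          rw [map_add, map_add]
          abel
        rw [goal_eq]
        exact add_mem (mixJ₂ f₁ f₂ _ hjB)
          (add_mem (mixJ₁ f₁ f₂ hjA _) (mixJ₁ f₁ f₂ hjA _))
  -- linearity in `w`
  classical
  have hw : w = ∑ p : Fin N × Fin M, Pi.single p (w p) := (Finset.univ_sum_single w).symm
  have hcw : (fun p => (c₁ ⊗ₜ[K] c₂) * w p)
      = ∑ q : Fin N × Fin M, Pi.single q ((c₁ ⊗ₜ[K] c₂) * w q) :=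
    (Finset.univ_sum_single _).symm
  have e : mixE K A₁ A₂ (TensorProduct.map π₁ π₂ (psiMap K A₁ A₂ N M (fun p => (c₁ ⊗ₜ[K] c₂) * w p)))
      - lmulT (c₁ ⊗ₜ[K] c₂) (mixE K A₁ A₂ (TensorProduct.map π₁ π₂ (psiMap K A₁ A₂ N M w)))
      = ∑ p : Fin N × Fin M,
          (mixE K A₁ A₂ (TensorProduct.map π₁ π₂
              (psiMap K A₁ A₂ N M (Pi.single p ((c₁ ⊗ₜ[K] c₂) * w p))))
            - lmulT (c₁ ⊗ₜ[K] c₂) (mixE K A₁ A₂ (TensorProduct.map π₁ π₂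
              (psiMap K A₁ A₂ N M (Pi.single p (w p)))))) := by
    rw [Finset.sum_sub_distrib]
    congr 1
    · rw [hcw, map_sum, map_sum, map_sum]
    · conv_lhs => rw [hw]
      rw [map_sum, map_sum, map_sum, map_sum]
  rw [e]
  exact Submodule.sum_mem _ (fun p _ => hsingle p (w p))

lemma Pi_rmul {N M : ℕ} (π₁ : (Fin N → A₁) →ₗ[K] A₁ ⊗[K] A₁)
    (π₂ : (Fin M → A₂) →ₗ[K] A₂ ⊗[K] A₂) (c₁ : A₁) (c₂ : A₂)
    (h₁ : ∀ v, π₁ (fun i => v i * c₁) - rmulT c₁ (π₁ v) ∈ relJ f₁)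
    (h₂ : ∀ v, π₂ (fun i => v i * c₂) - rmulT c₂ (π₂ v) ∈ relJ f₂)
    (w : Fin N × Fin M → A₁ ⊗[K] A₂) :
    mixE K A₁ A₂ (TensorProduct.map π₁ π₂ (psiMap K A₁ A₂ N M (fun p => w p * (c₁ ⊗ₜ[K] c₂))))
      - rmulT (c₁ ⊗ₜ[K] c₂) (mixE K A₁ A₂ (TensorProduct.map π₁ π₂ (psiMap K A₁ A₂ N M w)))
      ∈ relJ (Algebra.TensorProduct.map f₁ f₂) := by
  classical
  have hsingle : ∀ (p : Fin N × Fin M) (t : A₁ ⊗[K] A₂),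
      mixE K A₁ A₂ (TensorProduct.map π₁ π₂
          (psiMap K A₁ A₂ N M (Pi.single p (t * (c₁ ⊗ₜ[K] c₂)))))
        - rmulT (c₁ ⊗ₜ[K] c₂) (mixE K A₁ A₂ (TensorProduct.map π₁ π₂
          (psiMap K A₁ A₂ N M (Pi.single p t))))
        ∈ relJ (Algebra.TensorProduct.map f₁ f₂) := by
    intro p t
    induction t using TensorProduct.induction_on with
    | zero => simp
    | add t t' ht ht' =>
        have e : (Pi.single p ((t + t') * (c₁ ⊗ₜ[K] c₂))) =
            (Pi.single p (t * (c₁ ⊗ₜ[K] c₂)) : Fin N × Fin M → A₁ ⊗[K] A₂)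
              + Pi.single p (t' * (c₁ ⊗ₜ[K] c₂)) := by
          rw [add_mul]; exact Pi.single_add p _ _
        have e2 : (Pi.single p (t + t') : Fin N × Fin M → A₁ ⊗[K] A₂)
            = Pi.single p t + Pi.single p t' := Pi.single_add p _ _
        rw [e, e2]
        simp only [map_add]
        have := add_mem ht ht'
        convert this using 1
        abel
    | tmul a₁ a₂ =>
        have hψ1 : psiMap K A₁ A₂ N M (Pi.single p ((a₁ ⊗ₜ[K] a₂) * (c₁ ⊗ₜ[K] c₂)))
            = (Pi.single p.1 (a₁ * c₁)) ⊗ₜ[K] (Pi.single p.2 (a₂ * c₂)) := by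
          rw [Algebra.TensorProduct.tmul_mul_tmul, psiMap_single_tmul]
        rw [hψ1, psiMap_single_tmul, pi_single_mul_right p.1 c₁ a₁, pi_single_mul_right p.2 c₂ a₂]
        set X : Fin N → A₁ := Pi.single p.1 a₁ with hX
        set Y : Fin M → A₂ := Pi.single p.2 a₂ with hY
        have hjA := h₁ X
        have hjB := h₂ Y
        set jA := π₁ (fun i => X i * c₁) - rmulT c₁ (π₁ X) with hjAdef
        set jB := π₂ (fun i => Y i * c₂) - rmulT c₂ (π₂ Y) with hjBdef
        have expand : (π₁ fun i => X i * c₁) ⊗ₜ[K] (π₂ fun i => Y i * c₂)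
            = (rmulT c₁ (π₁ X)) ⊗ₜ[K] (rmulT c₂ (π₂ Y))
              + ((rmulT c₁ (π₁ X)) ⊗ₜ[K] jB
                + (jA ⊗ₜ[K] (rmulT c₂ (π₂ Y)) + jA ⊗ₜ[K] jB)) := by
          have eA : (π₁ fun i => X i * c₁) = rmulT c₁ (π₁ X) + jA := by
            rw [hjAdef]; abel
          have eB : (π₂ fun i => Y i * c₂) = rmulT c₂ (π₂ Y) + jB := by
            rw [hjBdef]; abel
          rw [eA, eB, TensorProduct.add_tmul, TensorProduct.tmul_add,
            TensorProduct.tmul_add]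
          abel
        rw [TensorProduct.map_tmul, TensorProduct.map_tmul, expand]
        have hmm : mixE K A₁ A₂ ((rmulT c₁ (π₁ X)) ⊗ₜ[K] (rmulT c₂ (π₂ Y)))
            = rmulT (c₁ ⊗ₜ[K] c₂) (mixE K A₁ A₂ ((π₁ X) ⊗ₜ[K] (π₂ Y))) := by
          rw [← mix_map_rmulT, TensorProduct.map_tmul]
        rw [map_add, hmm]
        have goal_eq : rmulT (c₁ ⊗ₜ[K] c₂) (mixE K A₁ A₂ ((π₁ X) ⊗ₜ[K] (π₂ Y)))
              + mixE K A₁ A₂ ((rmulT c₁ (π₁ X)) ⊗ₜ[K] jB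
                + (jA ⊗ₜ[K] (rmulT c₂ (π₂ Y)) + jA ⊗ₜ[K] jB))
              - rmulT (c₁ ⊗ₜ[K] c₂) (mixE K A₁ A₂ ((π₁ X) ⊗ₜ[K] (π₂ Y)))
            = mixE K A₁ A₂ ((rmulT c₁ (π₁ X)) ⊗ₜ[K] jB)
              + (mixE K A₁ A₂ (jA ⊗ₜ[K] (rmulT c₂ (π₂ Y)))
                + mixE K A₁ A₂ (jA ⊗ₜ[K] jB)) := by
          rw [map_add, map_add]
          abel
        rw [goal_eq]
        exact add_mem (mixJ₂ f₁ f₂ _ hjB)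
          (add_mem (mixJ₁ f₁ f₂ hjA _) (mixJ₁ f₁ f₂ hjA _))
  classical
  have hw : w = ∑ p : Fin N × Fin M, Pi.single p (w p) := (Finset.univ_sum_single w).symm
  have hcw : (fun p => w p * (c₁ ⊗ₜ[K] c₂))
      = ∑ q : Fin N × Fin M, Pi.single q (w q * (c₁ ⊗ₜ[K] c₂)) :=
    (Finset.univ_sum_single _).symm
  have e : mixE K A₁ A₂ (TensorProduct.map π₁ π₂ (psiMap K A₁ A₂ N M (fun p => w p * (c₁ ⊗ₜ[K] c₂))))
      - rmulT (c₁ ⊗ₜ[K] c₂) (mixE K A₁ A₂ (TensorProduct.map π₁ π₂ (psiMap K A₁ A₂ N M w)))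
      = ∑ p : Fin N × Fin M,
          (mixE K A₁ A₂ (TensorProduct.map π₁ π₂
              (psiMap K A₁ A₂ N M (Pi.single p (w p * (c₁ ⊗ₜ[K] c₂)))))
            - rmulT (c₁ ⊗ₜ[K] c₂) (mixE K A₁ A₂ (TensorProduct.map π₁ π₂
              (psiMap K A₁ A₂ N M (Pi.single p (w p)))))) := by
    rw [Finset.sum_sub_distrib]
    congr 1
    · rw [hcw, map_sum, map_sum, map_sum]
    · conv_lhs => rw [hw]
      rw [map_sum, map_sum, map_sum, map_sum]
  rw [e]
  exact Submodule.sum_mem _ (fun p _ => hsingle p (w p))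

lemma Pi_Phi {N M : ℕ} (ι₁ : A₁ ⊗[K] A₁ →ₗ[K] (Fin N → A₁))
    (π₁ : (Fin N → A₁) →ₗ[K] A₁ ⊗[K] A₁)
    (ι₂ : A₂ ⊗[K] A₂ →ₗ[K] (Fin M → A₂))
    (π₂ : (Fin M → A₂) →ₗ[K] A₂ ⊗[K] A₂)
    (hs₁ : ∀ z, π₁ (ι₁ z) - z ∈ relJ f₁)
    (hs₂ : ∀ z, π₂ (ι₂ z) - z ∈ relJ f₂)
    (w : (A₁ ⊗[K] A₁) ⊗[K] (A₂ ⊗[K] A₂)) :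
    mixE K A₁ A₂ (TensorProduct.map π₁ π₂ (TensorProduct.map ι₁ ι₂ w)) - mixE K A₁ A₂ w
      ∈ relJ (Algebra.TensorProduct.map f₁ f₂) := by
  induction w using TensorProduct.induction_on with
  | zero => simp
  | add u v hu hv =>
      simp only [map_add]
      have := add_mem hu hv
      convert this using 1
      abel
  | tmul u v =>
      rw [TensorProduct.map_tmul, TensorProduct.map_tmul]
      have hjA := hs₁ u
      have hjB := hs₂ v
      set jA := π₁ (ι₁ u) - u with hjAdef
      set jB := π₂ (ι₂ v) - v with hjBdef
      have expand : (π₁ (ι₁ u)) ⊗ₜ[K] (π₂ (ι₂ v))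
          = u ⊗ₜ[K] v + (u ⊗ₜ[K] jB + (jA ⊗ₜ[K] v + jA ⊗ₜ[K] jB)) := by
        have eA : π₁ (ι₁ u) = u + jA := by rw [hjAdef]; abel
        have eB : π₂ (ι₂ v) = v + jB := by rw [hjBdef]; abel
        rw [eA, eB, TensorProduct.add_tmul, TensorProduct.tmul_add, TensorProduct.tmul_add]
        abel
      rw [expand, map_add]
      have goal_eq : mixE K A₁ A₂ (u ⊗ₜ[K] v)
            + mixE K A₁ A₂ (u ⊗ₜ[K] jB + (jA ⊗ₜ[K] v + jA ⊗ₜ[K] jB))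
            - mixE K A₁ A₂ (u ⊗ₜ[K] v)
          = mixE K A₁ A₂ (u ⊗ₜ[K] jB)
            + (mixE K A₁ A₂ (jA ⊗ₜ[K] v) + mixE K A₁ A₂ (jA ⊗ₜ[K] jB)) := by
        rw [map_add, map_add]
        abel
      rw [goal_eq]
      exact add_mem (mixJ₂ f₁ f₂ _ hjB)
        (add_mem (mixJ₁ f₁ f₂ hjA _) (mixJ₁ f₁ f₂ hjA _))

end CoreD2

section Assembly

variable {K : Type*} [CommRing K]
variable {A₁ A₂ B₁ B₂ : Type*} [Ring A₁] [Ring A₂] [Ring B₁] [Ring B₂]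
  [Algebra K A₁] [Algebra K A₂] [Algebra K B₁] [Algebra K B₂]
variable (f₁ : B₁ →ₐ[K] A₁) (f₂ : B₂ →ₐ[K] A₂)

lemma leftD2_tensor (H₁ : LeftD2 f₁) (H₂ : LeftD2 f₂) :
    LeftD2 (Algebra.TensorProduct.map f₁ f₂) := by
  classical
  obtain ⟨N₁, hN₁, ι₁, π₁, k₁, l₁, r₁, pl₁, pr₁, s₁⟩ := H₁
  obtain ⟨N₂, hN₂, ι₂, π₂, k₂, l₂, r₂, pl₂, pr₂, s₂⟩ := H₂
  refine ⟨N₁ * N₂, Nat.mul_pos hN₁ hN₂,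
    LinearMap.funLeft K (A₁ ⊗[K] A₂) (⇑(finProdFinEquiv (m := N₁) (n := N₂)).symm) ∘ₗ
      (phiMap K A₁ A₂ N₁ N₂ ∘ₗ TensorProduct.map ι₁ ι₂ ∘ₗ ((mixE K A₁ A₂).symm).toLinearMap),
    ((mixE K A₁ A₂).toLinearMap ∘ₗ TensorProduct.map π₁ π₂ ∘ₗ psiMap K A₁ A₂ N₁ N₂) ∘ₗ
      LinearMap.funLeft K (A₁ ⊗[K] A₂) (⇑(finProdFinEquiv (m := N₁) (n := N₂))),
    ?_, ?_, ?_, ?_, ?_, ?_⟩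
  · -- kernel
    intro z hz
    have h0 := relJ_decomp f₁ f₂ (phiMap K A₁ A₂ N₁ N₂ ∘ₗ TensorProduct.map ι₁ ι₂) ⊥
      (fun {j} hj z' => by
        simp only [LinearMap.coe_comp, Function.comp_apply, TensorProduct.map_tmul,
          k₁ j hj, Submodule.mem_bot]
        rw [TensorProduct.zero_tmul, map_zero])
      (fun z' {j} hj => by
        simp only [LinearMap.coe_comp, Function.comp_apply, TensorProduct.map_tmul,
          k₂ j hj, Submodule.mem_bot]
        rw [TensorProduct.tmul_zero, map_zero])
      z hz
    simp only [LinearMap.coe_comp, Function.comp_apply, Submodule.mem_bot,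
      LinearEquiv.coe_coe] at h0 ⊢
    rw [h0, map_zero]
  · -- left B-linearity of ι
    have core : ∀ (b : B₁ ⊗[K] B₂) (z : (A₁ ⊗[K] A₂) ⊗[K] (A₁ ⊗[K] A₂)),
        phiMap K A₁ A₂ N₁ N₂ (TensorProduct.map ι₁ ι₂ ((mixE K A₁ A₂).symm
            (lmulT ((Algebra.TensorProduct.map f₁ f₂) b) z)))
          = fun p => (Algebra.TensorProduct.map f₁ f₂) b *
              phiMap K A₁ A₂ N₁ N₂ (TensorProduct.map ι₁ ι₂ ((mixE K A₁ A₂).symm z)) p := by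
      intro b
      induction b using TensorProduct.induction_on with
      | zero =>
          intro z
          rw [map_zero, lmulT_zero]
          funext p
          simp
      | tmul b₁ b₂ =>
          intro z
          have h := Phi_lmul (K := K) ι₁ ι₂ (f₁ b₁) (f₂ b₂) (l₁ b₁) (l₂ b₂) z
          simpa using h
      | add b b' hb hb' =>
          intro z
          have e : lmulT ((Algebra.TensorProduct.map f₁ f₂) (b + b')) z
              = lmulT ((Algebra.TensorProduct.map f₁ f₂) b) z
                + lmulT ((Algebra.TensorProduct.map f₁ f₂) b') z := by
            rw [map_add, lmulT_add]; rfl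
          rw [e, map_add, map_add, map_add]
          funext p
          simp only [Pi.add_apply, congrFun (hb z) p, congrFun (hb' z) p, map_add, add_mul]
    intro b z
    funext i
    simp only [LinearMap.coe_comp, Function.comp_apply, LinearMap.funLeft_apply,
      LinearEquiv.coe_coe]
    rw [congrFun (core b z) (finProdFinEquiv.symm i)]
  · -- right A-linearity of ι
    have core : ∀ (a : A₁ ⊗[K] A₂) (z : (A₁ ⊗[K] A₂) ⊗[K] (A₁ ⊗[K] A₂)),
        phiMap K A₁ A₂ N₁ N₂ (TensorProduct.map ι₁ ι₂ ((mixE K A₁ A₂).symm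
            (rmulT a z)))
          = fun p => phiMap K A₁ A₂ N₁ N₂
              (TensorProduct.map ι₁ ι₂ ((mixE K A₁ A₂).symm z)) p * a := by
      intro a
      induction a using TensorProduct.induction_on with
      | zero =>
          intro z
          rw [rmulT_zero]
          funext p
          simp
      | tmul a₁ a₂ =>
          intro z
          have h := Phi_rmul (K := K) ι₁ ι₂ a₁ a₂ (r₁ a₁) (r₂ a₂) z
          simpa using h
      | add a a' ha ha' =>
          intro z
          have e : rmulT (a + a') z = rmulT a z + rmulT a' z := by
            rw [rmulT_add]; rfl
          rw [e, map_add, map_add, map_add]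
          funext p
          simp only [Pi.add_apply, congrFun (ha z) p, congrFun (ha' z) p, map_add, mul_add]
    intro a z
    funext i
    simp only [LinearMap.coe_comp, Function.comp_apply, LinearMap.funLeft_apply,
      LinearEquiv.coe_coe]
    rw [congrFun (core a z) (finProdFinEquiv.symm i)]
  · -- left B-linearity of π
    have core : ∀ (b : B₁ ⊗[K] B₂) (w : Fin N₁ × Fin N₂ → A₁ ⊗[K] A₂),
        mixE K A₁ A₂ (TensorProduct.map π₁ π₂ (psiMap K A₁ A₂ N₁ N₂
            (fun p => (Algebra.TensorProduct.map f₁ f₂) b * w p)))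
          - lmulT ((Algebra.TensorProduct.map f₁ f₂) b)
              (mixE K A₁ A₂ (TensorProduct.map π₁ π₂ (psiMap K A₁ A₂ N₁ N₂ w)))
          ∈ relJ (Algebra.TensorProduct.map f₁ f₂) := by
      intro b
      induction b using TensorProduct.induction_on with
      | zero =>
          intro w
          have e : (fun p => (Algebra.TensorProduct.map f₁ f₂) 0 * w p)
              = (0 : Fin N₁ × Fin N₂ → A₁ ⊗[K] A₂) := by
            funext p; simp
          rw [e]
          simp [lmulT_zero]
      | tmul b₁ b₂ =>
          intro w
          have h := Pi_lmul f₁ f₂ π₁ π₂ (f₁ b₁) (f₂ b₂) (pl₁ b₁) (pl₂ b₂) w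
          simpa using h
      | add b b' hb hb' =>
          intro w
          have e : (fun p => (Algebra.TensorProduct.map f₁ f₂) (b + b') * w p)
              = (fun p => (Algebra.TensorProduct.map f₁ f₂) b * w p)
                + (fun p => (Algebra.TensorProduct.map f₁ f₂) b' * w p) := by
            funext p; simp [add_mul]
          rw [e]
          simp only [map_add, lmulT_add, LinearMap.add_apply]
          have := add_mem (hb w) (hb' w)
          convert this using 1
          abel
    intro b v
    simp only [LinearMap.coe_comp, Function.comp_apply, LinearEquiv.coe_coe]
    have hfl : (LinearMap.funLeft K (A₁ ⊗[K] A₂) (⇑(finProdFinEquiv (m := N₁) (n := N₂))))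
        (fun i => (Algebra.TensorProduct.map f₁ f₂) b * v i)
        = fun p => (Algebra.TensorProduct.map f₁ f₂) b
            * (LinearMap.funLeft K (A₁ ⊗[K] A₂) (⇑(finProdFinEquiv (m := N₁) (n := N₂))) v) p := rfl
    rw [hfl]
    exact core b _
  · -- right A-linearity of π
    have core : ∀ (a : A₁ ⊗[K] A₂) (w : Fin N₁ × Fin N₂ → A₁ ⊗[K] A₂),
        mixE K A₁ A₂ (TensorProduct.map π₁ π₂ (psiMap K A₁ A₂ N₁ N₂
            (fun p => w p * a)))
          - rmulT a (mixE K A₁ A₂ (TensorProduct.map π₁ π₂ (psiMap K A₁ A₂ N₁ N₂ w)))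
          ∈ relJ (Algebra.TensorProduct.map f₁ f₂) := by
      intro a
      induction a using TensorProduct.induction_on with
      | zero =>
          intro w
          have e : (fun p => w p * (0 : A₁ ⊗[K] A₂))
              = (0 : Fin N₁ × Fin N₂ → A₁ ⊗[K] A₂) := by
            funext p; simp
          rw [e]
          simp [rmulT_zero]
      | tmul a₁ a₂ =>
          intro w
          exact Pi_rmul f₁ f₂ π₁ π₂ a₁ a₂ (pr₁ a₁) (pr₂ a₂) w
      | add a a' ha ha' =>
          intro w
          have e : (fun p => w p * (a + a'))
              = (fun p => w p * a) + (fun p => w p * a') := by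
            funext p; simp [mul_add]
          rw [e]
          simp only [map_add, rmulT_add, LinearMap.add_apply]
          have := add_mem (ha w) (ha' w)
          convert this using 1
          abel
    intro a v
    simp only [LinearMap.coe_comp, Function.comp_apply, LinearEquiv.coe_coe]
    have hfl : (LinearMap.funLeft K (A₁ ⊗[K] A₂) (⇑(finProdFinEquiv (m := N₁) (n := N₂))))
        (fun i => v i * a)
        = fun p => (LinearMap.funLeft K (A₁ ⊗[K] A₂)
            (⇑(finProdFinEquiv (m := N₁) (n := N₂))) v) p * a := rfl
    rw [hfl]
    exact core a _
  · -- splitting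
    intro z
    simp only [LinearMap.coe_comp, Function.comp_apply, LinearEquiv.coe_coe]
    have hreix : (LinearMap.funLeft K (A₁ ⊗[K] A₂) (⇑(finProdFinEquiv (m := N₁) (n := N₂))))
        ((LinearMap.funLeft K (A₁ ⊗[K] A₂) (⇑(finProdFinEquiv (m := N₁) (n := N₂)).symm))
          (phiMap K A₁ A₂ N₁ N₂ (TensorProduct.map ι₁ ι₂ ((mixE K A₁ A₂).symm z))))
        = phiMap K A₁ A₂ N₁ N₂ (TensorProduct.map ι₁ ι₂ ((mixE K A₁ A₂).symm z)) := by
      funext p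
      simp [LinearMap.funLeft_apply]
    rw [hreix, psi_phi]
    have h := Pi_Phi f₁ f₂ ι₁ π₁ ι₂ π₂ s₁ s₂ ((mixE K A₁ A₂).symm z)
    rwa [LinearEquiv.apply_symm_apply] at h

lemma rightD2_tensor (H₁ : RightD2 f₁) (H₂ : RightD2 f₂) :
    RightD2 (Algebra.TensorProduct.map f₁ f₂) := by
  classical
  obtain ⟨N₁, hN₁, ι₁, π₁, k₁, l₁, r₁, pl₁, pr₁, s₁⟩ := H₁
  obtain ⟨N₂, hN₂, ι₂, π₂, k₂, l₂, r₂, pl₂, pr₂, s₂⟩ := H₂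
  refine ⟨N₁ * N₂, Nat.mul_pos hN₁ hN₂,
    LinearMap.funLeft K (A₁ ⊗[K] A₂) (⇑(finProdFinEquiv (m := N₁) (n := N₂)).symm) ∘ₗ
      (phiMap K A₁ A₂ N₁ N₂ ∘ₗ TensorProduct.map ι₁ ι₂ ∘ₗ ((mixE K A₁ A₂).symm).toLinearMap),
    ((mixE K A₁ A₂).toLinearMap ∘ₗ TensorProduct.map π₁ π₂ ∘ₗ psiMap K A₁ A₂ N₁ N₂) ∘ₗ
      LinearMap.funLeft K (A₁ ⊗[K] A₂) (⇑(finProdFinEquiv (m := N₁) (n := N₂))),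
    ?_, ?_, ?_, ?_, ?_, ?_⟩
  · -- kernel
    intro z hz
    have h0 := relJ_decomp f₁ f₂ (phiMap K A₁ A₂ N₁ N₂ ∘ₗ TensorProduct.map ι₁ ι₂) ⊥
      (fun {j} hj z' => by
        simp only [LinearMap.coe_comp, Function.comp_apply, TensorProduct.map_tmul,
          k₁ j hj, Submodule.mem_bot]
        rw [TensorProduct.zero_tmul, map_zero])
      (fun z' {j} hj => by
        simp only [LinearMap.coe_comp, Function.comp_apply, TensorProduct.map_tmul,
          k₂ j hj, Submodule.mem_bot]
        rw [TensorProduct.tmul_zero, map_zero])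
      z hz
    simp only [LinearMap.coe_comp, Function.comp_apply, Submodule.mem_bot,
      LinearEquiv.coe_coe] at h0 ⊢
    rw [h0, map_zero]
  · -- left A-linearity of ι
    have core : ∀ (a : A₁ ⊗[K] A₂) (z : (A₁ ⊗[K] A₂) ⊗[K] (A₁ ⊗[K] A₂)),
        phiMap K A₁ A₂ N₁ N₂ (TensorProduct.map ι₁ ι₂ ((mixE K A₁ A₂).symm
            (lmulT a z)))
          = fun p => a * phiMap K A₁ A₂ N₁ N₂
              (TensorProduct.map ι₁ ι₂ ((mixE K A₁ A₂).symm z)) p := by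
      intro a
      induction a using TensorProduct.induction_on with
      | zero =>
          intro z
          rw [lmulT_zero]
          funext p
          simp
      | tmul a₁ a₂ =>
          intro z
          have h := Phi_lmul (K := K) ι₁ ι₂ a₁ a₂ (l₁ a₁) (l₂ a₂) z
          simpa using h
      | add a a' ha ha' =>
          intro z
          have e : lmulT (a + a') z = lmulT a z + lmulT a' z := by
            rw [lmulT_add]; rfl
          rw [e, map_add, map_add, map_add]
          funext p
          simp only [Pi.add_apply, congrFun (ha z) p, congrFun (ha' z) p, map_add, add_mul]
    intro a z
    funext i
    simp only [LinearMap.coe_comp, Function.comp_apply, LinearMap.funLeft_apply,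
      LinearEquiv.coe_coe]
    rw [congrFun (core a z) (finProdFinEquiv.symm i)]
  · -- right B-linearity of ι
    have core : ∀ (b : B₁ ⊗[K] B₂) (z : (A₁ ⊗[K] A₂) ⊗[K] (A₁ ⊗[K] A₂)),
        phiMap K A₁ A₂ N₁ N₂ (TensorProduct.map ι₁ ι₂ ((mixE K A₁ A₂).symm
            (rmulT ((Algebra.TensorProduct.map f₁ f₂) b) z)))
          = fun p => phiMap K A₁ A₂ N₁ N₂
              (TensorProduct.map ι₁ ι₂ ((mixE K A₁ A₂).symm z)) p
                * (Algebra.TensorProduct.map f₁ f₂) b := by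
      intro b
      induction b using TensorProduct.induction_on with
      | zero =>
          intro z
          rw [map_zero, rmulT_zero]
          funext p
          simp
      | tmul b₁ b₂ =>
          intro z
          have h := Phi_rmul (K := K) ι₁ ι₂ (f₁ b₁) (f₂ b₂) (r₁ b₁) (r₂ b₂) z
          simpa using h
      | add b b' hb hb' =>
          intro z
          have e : rmulT ((Algebra.TensorProduct.map f₁ f₂) (b + b')) z
              = rmulT ((Algebra.TensorProduct.map f₁ f₂) b) z
                + rmulT ((Algebra.TensorProduct.map f₁ f₂) b') z := by
            rw [map_add, rmulT_add]; rfl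
          rw [e, map_add, map_add, map_add]
          funext p
          simp only [Pi.add_apply, congrFun (hb z) p, congrFun (hb' z) p, map_add, mul_add]
    intro b z
    funext i
    simp only [LinearMap.coe_comp, Function.comp_apply, LinearMap.funLeft_apply,
      LinearEquiv.coe_coe]
    rw [congrFun (core b z) (finProdFinEquiv.symm i)]
  · -- left A-linearity of π
    have core : ∀ (a : A₁ ⊗[K] A₂) (w : Fin N₁ × Fin N₂ → A₁ ⊗[K] A₂),
        mixE K A₁ A₂ (TensorProduct.map π₁ π₂ (psiMap K A₁ A₂ N₁ N₂
            (fun p => a * w p)))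
          - lmulT a (mixE K A₁ A₂ (TensorProduct.map π₁ π₂ (psiMap K A₁ A₂ N₁ N₂ w)))
          ∈ relJ (Algebra.TensorProduct.map f₁ f₂) := by
      intro a
      induction a using TensorProduct.induction_on with
      | zero =>
          intro w
          have e : (fun p => (0 : A₁ ⊗[K] A₂) * w p)
              = (0 : Fin N₁ × Fin N₂ → A₁ ⊗[K] A₂) := by
            funext p; simp
          rw [e]
          simp [lmulT_zero]
      | tmul a₁ a₂ =>
          intro w
          exact Pi_lmul f₁ f₂ π₁ π₂ a₁ a₂ (pl₁ a₁) (pl₂ a₂) w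
      | add a a' ha ha' =>
          intro w
          have e : (fun p => (a + a') * w p)
              = (fun p => a * w p) + (fun p => a' * w p) := by
            funext p; simp [add_mul]
          rw [e]
          simp only [map_add, lmulT_add, LinearMap.add_apply]
          have := add_mem (ha w) (ha' w)
          convert this using 1
          abel
    intro a v
    simp only [LinearMap.coe_comp, Function.comp_apply, LinearEquiv.coe_coe]
    have hfl : (LinearMap.funLeft K (A₁ ⊗[K] A₂) (⇑(finProdFinEquiv (m := N₁) (n := N₂))))
        (fun i => a * v i)
        = fun p => a * (LinearMap.funLeft K (A₁ ⊗[K] A₂)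
            (⇑(finProdFinEquiv (m := N₁) (n := N₂))) v) p := rfl
    rw [hfl]
    exact core a _
  · -- right B-linearity of π
    have core : ∀ (b : B₁ ⊗[K] B₂) (w : Fin N₁ × Fin N₂ → A₁ ⊗[K] A₂),
        mixE K A₁ A₂ (TensorProduct.map π₁ π₂ (psiMap K A₁ A₂ N₁ N₂
            (fun p => w p * (Algebra.TensorProduct.map f₁ f₂) b)))
          - rmulT ((Algebra.TensorProduct.map f₁ f₂) b)
              (mixE K A₁ A₂ (TensorProduct.map π₁ π₂ (psiMap K A₁ A₂ N₁ N₂ w)))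
          ∈ relJ (Algebra.TensorProduct.map f₁ f₂) := by
      intro b
      induction b using TensorProduct.induction_on with
      | zero =>
          intro w
          have e : (fun p => w p * (Algebra.TensorProduct.map f₁ f₂) 0)
              = (0 : Fin N₁ × Fin N₂ → A₁ ⊗[K] A₂) := by
            funext p; simp
          rw [e]
          simp [rmulT_zero]
      | tmul b₁ b₂ =>
          intro w
          have h := Pi_rmul f₁ f₂ π₁ π₂ (f₁ b₁) (f₂ b₂) (pr₁ b₁) (pr₂ b₂) w
          simpa using h
      | add b b' hb hb' =>
          intro w
          have e : (fun p => w p * (Algebra.TensorProduct.map f₁ f₂) (b + b'))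
              = (fun p => w p * (Algebra.TensorProduct.map f₁ f₂) b)
                + (fun p => w p * (Algebra.TensorProduct.map f₁ f₂) b') := by
            funext p; simp [mul_add]
          rw [e]
          simp only [map_add, rmulT_add, LinearMap.add_apply]
          have := add_mem (hb w) (hb' w)
          convert this using 1
          abel
    intro b v
    simp only [LinearMap.coe_comp, Function.comp_apply, LinearEquiv.coe_coe]
    have hfl : (LinearMap.funLeft K (A₁ ⊗[K] A₂) (⇑(finProdFinEquiv (m := N₁) (n := N₂))))
        (fun i => v i * (Algebra.TensorProduct.map f₁ f₂) b)
        = fun p => (LinearMap.funLeft K (A₁ ⊗[K] A₂)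
            (⇑(finProdFinEquiv (m := N₁) (n := N₂))) v) p
              * (Algebra.TensorProduct.map f₁ f₂) b := rfl
    rw [hfl]
    exact core b _
  · -- splitting
    intro z
    simp only [LinearMap.coe_comp, Function.comp_apply, LinearEquiv.coe_coe]
    have hreix : (LinearMap.funLeft K (A₁ ⊗[K] A₂) (⇑(finProdFinEquiv (m := N₁) (n := N₂))))
        ((LinearMap.funLeft K (A₁ ⊗[K] A₂) (⇑(finProdFinEquiv (m := N₁) (n := N₂)).symm))
          (phiMap K A₁ A₂ N₁ N₂ (TensorProduct.map ι₁ ι₂ ((mixE K A₁ A₂).symm z))))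
        = phiMap K A₁ A₂ N₁ N₂ (TensorProduct.map ι₁ ι₂ ((mixE K A₁ A₂).symm z)) := by
      funext p
      simp [LinearMap.funLeft_apply]
    rw [hreix, psi_phi]
    have h := Pi_Phi f₁ f₂ ι₁ π₁ ι₂ π₂ s₁ s₂ ((mixE K A₁ A₂).symm z)
    rwa [LinearEquiv.apply_symm_apply] at h

lemma isBB_tensor {γ₁ : A₁ →ₗ[K] A₁} {γ₂ : A₂ →ₗ[K] A₂}
    (h₁ : IsBB f₁ γ₁) (h₂ : IsBB f₂ γ₂) :
    IsBB (Algebra.TensorProduct.map f₁ f₂) (TensorProduct.map γ₁ γ₂) := by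
  constructor
  · intro b x
    induction b using TensorProduct.induction_on with
    | zero => simp
    | add b b' hb hb' => simp only [map_add, add_mul, hb, hb']
    | tmul b₁ b₂ =>
        induction x using TensorProduct.induction_on with
        | zero => simp
        | add x x' hx hx' => simp only [map_add, mul_add, hx, hx']
        | tmul x₁ x₂ =>
            simp [Algebra.TensorProduct.tmul_mul_tmul, h₁.1, h₂.1]
  · intro b x
    induction b using TensorProduct.induction_on with
    | zero => simp
    | add b b' hb hb' => simp only [map_add, mul_add, hb, hb']
    | tmul b₁ b₂ =>
        induction x using TensorProduct.induction_on with
        | zero => simp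
        | add x x' hx hx' => simp only [map_add, add_mul, hx, hx']
        | tmul x₁ x₂ =>
            simp [Algebra.TensorProduct.tmul_mul_tmul, h₁.2, h₂.2]

lemma isCent_tensor {u₁ : A₁ ⊗[K] A₁} {u₂ : A₂ ⊗[K] A₂}
    (h₁ : IsCent f₁ u₁) (h₂ : IsCent f₂ u₂) :
    IsCent (Algebra.TensorProduct.map f₁ f₂) (mixE K A₁ A₂ (u₁ ⊗ₜ[K] u₂)) := by
  intro b
  induction b using TensorProduct.induction_on with
  | zero => simp [lmulT_zero, rmulT_zero]
  | add b b' hb hb' =>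
      have e : lmulT ((Algebra.TensorProduct.map f₁ f₂) (b + b'))
            (mixE K A₁ A₂ (u₁ ⊗ₜ[K] u₂))
          - rmulT ((Algebra.TensorProduct.map f₁ f₂) (b + b'))
            (mixE K A₁ A₂ (u₁ ⊗ₜ[K] u₂))
          = (lmulT ((Algebra.TensorProduct.map f₁ f₂) b) (mixE K A₁ A₂ (u₁ ⊗ₜ[K] u₂))
              - rmulT ((Algebra.TensorProduct.map f₁ f₂) b) (mixE K A₁ A₂ (u₁ ⊗ₜ[K] u₂)))
            + (lmulT ((Algebra.TensorProduct.map f₁ f₂) b') (mixE K A₁ A₂ (u₁ ⊗ₜ[K] u₂))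
              - rmulT ((Algebra.TensorProduct.map f₁ f₂) b') (mixE K A₁ A₂ (u₁ ⊗ₜ[K] u₂))) := by
        rw [map_add, lmulT_add, rmulT_add]
        simp only [LinearMap.add_apply]
        abel
      rw [e]
      exact add_mem hb hb'
  | tmul b₁ b₂ =>
      have hc : (Algebra.TensorProduct.map f₁ f₂) (b₁ ⊗ₜ[K] b₂)
          = (f₁ b₁ ⊗ₜ[K] (1 : A₂)) * ((1 : A₁) ⊗ₜ[K] f₂ b₂) := by
        simp [Algebra.TensorProduct.tmul_mul_tmul]
      have el₁ : lmulT (f₁ b₁ ⊗ₜ[K] (1 : A₂)) (mixE K A₁ A₂ (u₁ ⊗ₜ[K] u₂))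
          = mixE K A₁ A₂ ((lmulT (f₁ b₁) u₁) ⊗ₜ[K] u₂) := by
        rw [← mix_map_lmulT, TensorProduct.map_tmul, lmulT_one, LinearMap.id_coe, id_eq]
      have er₁ : rmulT (f₁ b₁ ⊗ₜ[K] (1 : A₂)) (mixE K A₁ A₂ (u₁ ⊗ₜ[K] u₂))
          = mixE K A₁ A₂ ((rmulT (f₁ b₁) u₁) ⊗ₜ[K] u₂) := by
        rw [← mix_map_rmulT, TensorProduct.map_tmul, rmulT_one, LinearMap.id_coe, id_eq]
      have el₂ : lmulT ((1 : A₁) ⊗ₜ[K] f₂ b₂) (mixE K A₁ A₂ (u₁ ⊗ₜ[K] u₂))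
          = mixE K A₁ A₂ (u₁ ⊗ₜ[K] (lmulT (f₂ b₂) u₂)) := by
        rw [← mix_map_lmulT, TensorProduct.map_tmul, lmulT_one, LinearMap.id_coe, id_eq]
      have er₂ : rmulT ((1 : A₁) ⊗ₜ[K] f₂ b₂) (mixE K A₁ A₂ (u₁ ⊗ₜ[K] u₂))
          = mixE K A₁ A₂ (u₁ ⊗ₜ[K] (rmulT (f₂ b₂) u₂)) := by
        rw [← mix_map_rmulT, TensorProduct.map_tmul, rmulT_one, LinearMap.id_coe, id_eq]
      have mc : lmulT (f₁ b₁ ⊗ₜ[K] (1 : A₂)) (mixE K A₁ A₂ (u₁ ⊗ₜ[K] u₂))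
          - rmulT (f₁ b₁ ⊗ₜ[K] (1 : A₂)) (mixE K A₁ A₂ (u₁ ⊗ₜ[K] u₂))
          ∈ relJ (Algebra.TensorProduct.map f₁ f₂) := by
        rw [el₁, er₁, ← map_sub, ← TensorProduct.sub_tmul]
        exact mixJ₁ f₁ f₂ (h₁ b₁) u₂
      have md : lmulT ((1 : A₁) ⊗ₜ[K] f₂ b₂) (mixE K A₁ A₂ (u₁ ⊗ₜ[K] u₂))
          - rmulT ((1 : A₁) ⊗ₜ[K] f₂ b₂) (mixE K A₁ A₂ (u₁ ⊗ₜ[K] u₂))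
          ∈ relJ (Algebra.TensorProduct.map f₁ f₂) := by
        rw [el₂, er₂, ← map_sub, ← TensorProduct.tmul_sub]
        exact mixJ₂ f₁ f₂ u₁ (h₂ b₂)
      have split : ∀ (c d : A₁ ⊗[K] A₂) (T : (A₁ ⊗[K] A₂) ⊗[K] (A₁ ⊗[K] A₂)),
          lmulT (c * d) T - rmulT (c * d) T
            = lmulT c (lmulT d T - rmulT d T) + rmulT d (lmulT c T - rmulT c T) := by
        intro c d T
        rw [lmulT_mul, rmulT_mul]
        simp only [LinearMap.coe_comp, Function.comp_apply, map_sub]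
        rw [lmulT_rmulT]
        abel
      rw [hc, split]
      exact add_mem (lmulT_mem_relJ _ _ md) (rmulT_mem_relJ _ _ mc)

lemma rightQB_sum {N M : ℕ} (γ₁ : Fin N → A₁ →ₗ[K] A₁) (u₁ : Fin N → A₁ ⊗[K] A₁)
    (γ₂ : Fin M → A₂ →ₗ[K] A₂) (u₂ : Fin M → A₂ ⊗[K] A₂)
    (H₁ : ∀ x y : A₁, (∑ j, lmulT (x * γ₁ j y) (u₁ j)) - x ⊗ₜ[K] y ∈ relJ f₁)
    (H₂ : ∀ x y : A₂, (∑ j, lmulT (x * γ₂ j y) (u₂ j)) - x ⊗ₜ[K] y ∈ relJ f₂) :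
    ∀ x y : A₁ ⊗[K] A₂,
      (∑ p : Fin N × Fin M, lmulT (x * (TensorProduct.map (γ₁ p.1) (γ₂ p.2)) y)
          (mixE K A₁ A₂ (u₁ p.1 ⊗ₜ[K] u₂ p.2))) - x ⊗ₜ[K] y
        ∈ relJ (Algebra.TensorProduct.map f₁ f₂) := by
  intro x y
  induction x using TensorProduct.induction_on with
  | zero => simp [lmulT_zero]
  | add x x' hx hx' =>
      have e : (∑ p : Fin N × Fin M, lmulT ((x + x') * (TensorProduct.map (γ₁ p.1) (γ₂ p.2)) y)
            (mixE K A₁ A₂ (u₁ p.1 ⊗ₜ[K] u₂ p.2))) - (x + x') ⊗ₜ[K] y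
          = ((∑ p : Fin N × Fin M, lmulT (x * (TensorProduct.map (γ₁ p.1) (γ₂ p.2)) y)
              (mixE K A₁ A₂ (u₁ p.1 ⊗ₜ[K] u₂ p.2))) - x ⊗ₜ[K] y)
            + ((∑ p : Fin N × Fin M, lmulT (x' * (TensorProduct.map (γ₁ p.1) (γ₂ p.2)) y)
              (mixE K A₁ A₂ (u₁ p.1 ⊗ₜ[K] u₂ p.2))) - x' ⊗ₜ[K] y) := by
        simp only [add_mul, lmulT_add, LinearMap.add_apply, TensorProduct.add_tmul,
          Finset.sum_add_distrib]
        abel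
      rw [e]
      exact add_mem hx hx'
  | tmul x₁ x₂ =>
      induction y using TensorProduct.induction_on with
      | zero => simp [lmulT_zero]
      | add y y' hy hy' =>
          have e : (∑ p : Fin N × Fin M,
                lmulT ((x₁ ⊗ₜ[K] x₂) * (TensorProduct.map (γ₁ p.1) (γ₂ p.2)) (y + y'))
                  (mixE K A₁ A₂ (u₁ p.1 ⊗ₜ[K] u₂ p.2))) - (x₁ ⊗ₜ[K] x₂) ⊗ₜ[K] (y + y')
              = ((∑ p : Fin N × Fin M,
                  lmulT ((x₁ ⊗ₜ[K] x₂) * (TensorProduct.map (γ₁ p.1) (γ₂ p.2)) y)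
                    (mixE K A₁ A₂ (u₁ p.1 ⊗ₜ[K] u₂ p.2))) - (x₁ ⊗ₜ[K] x₂) ⊗ₜ[K] y)
                + ((∑ p : Fin N × Fin M,
                  lmulT ((x₁ ⊗ₜ[K] x₂) * (TensorProduct.map (γ₁ p.1) (γ₂ p.2)) y')
                    (mixE K A₁ A₂ (u₁ p.1 ⊗ₜ[K] u₂ p.2))) - (x₁ ⊗ₜ[K] x₂) ⊗ₜ[K] y') := by
            simp only [map_add, mul_add, lmulT_add, LinearMap.add_apply,
              TensorProduct.tmul_add, Finset.sum_add_distrib]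
            abel
          rw [e]
          exact add_mem hy hy'
      | tmul y₁ y₂ =>
          have step : ∀ p : Fin N × Fin M,
              lmulT ((x₁ ⊗ₜ[K] x₂) * (TensorProduct.map (γ₁ p.1) (γ₂ p.2)) (y₁ ⊗ₜ[K] y₂))
                  (mixE K A₁ A₂ (u₁ p.1 ⊗ₜ[K] u₂ p.2))
                = mixE K A₁ A₂ ((lmulT (x₁ * γ₁ p.1 y₁) (u₁ p.1))
                    ⊗ₜ[K] (lmulT (x₂ * γ₂ p.2 y₂) (u₂ p.2))) := by
            intro p
            rw [TensorProduct.map_tmul, Algebra.TensorProduct.tmul_mul_tmul,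
              ← mix_map_lmulT, TensorProduct.map_tmul]
          rw [Finset.sum_congr rfl (fun p _ => step p), ← Finset.univ_product_univ,
            Finset.sum_product]
          have e2 : mixE K A₁ A₂ ((∑ i, lmulT (x₁ * γ₁ i y₁) (u₁ i))
                ⊗ₜ[K] (∑ j, lmulT (x₂ * γ₂ j y₂) (u₂ j)))
              = ∑ i, ∑ j, mixE K A₁ A₂ ((lmulT (x₁ * γ₁ i y₁) (u₁ i))
                  ⊗ₜ[K] (lmulT (x₂ * γ₂ j y₂) (u₂ j))) := by
            rw [TensorProduct.sum_tmul, map_sum]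
            exact Finset.sum_congr rfl (fun i _ => by rw [TensorProduct.tmul_sum, map_sum])
          rw [← e2]
          have d : mixE K A₁ A₂ ((∑ i, lmulT (x₁ * γ₁ i y₁) (u₁ i))
                ⊗ₜ[K] (∑ j, lmulT (x₂ * γ₂ j y₂) (u₂ j)))
              - (x₁ ⊗ₜ[K] x₂) ⊗ₜ[K] (y₁ ⊗ₜ[K] y₂)
              = mixE K A₁ A₂ (((∑ i, lmulT (x₁ * γ₁ i y₁) (u₁ i)) - x₁ ⊗ₜ[K] y₁)
                  ⊗ₜ[K] (∑ j, lmulT (x₂ * γ₂ j y₂) (u₂ j)))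
                + mixE K A₁ A₂ ((x₁ ⊗ₜ[K] y₁)
                  ⊗ₜ[K] ((∑ j, lmulT (x₂ * γ₂ j y₂) (u₂ j)) - x₂ ⊗ₜ[K] y₂)) := by
            rw [TensorProduct.sub_tmul, TensorProduct.tmul_sub, map_sub, map_sub, mixE_tmul]
            abel
          rw [d]
          exact add_mem (mixJ₁ f₁ f₂ (H₁ x₁ y₁) _) (mixJ₂ f₁ f₂ _ (H₂ x₂ y₂))

lemma leftQB_sum {N M : ℕ} (β₁ : Fin N → A₁ →ₗ[K] A₁) (t₁ : Fin N → A₁ ⊗[K] A₁)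
    (β₂ : Fin M → A₂ →ₗ[K] A₂) (t₂ : Fin M → A₂ ⊗[K] A₂)
    (H₁ : ∀ x y : A₁, (∑ i, rmulT (β₁ i x * y) (t₁ i)) - x ⊗ₜ[K] y ∈ relJ f₁)
    (H₂ : ∀ x y : A₂, (∑ i, rmulT (β₂ i x * y) (t₂ i)) - x ⊗ₜ[K] y ∈ relJ f₂) :
    ∀ x y : A₁ ⊗[K] A₂,
      (∑ p : Fin N × Fin M, rmulT ((TensorProduct.map (β₁ p.1) (β₂ p.2)) x * y)
          (mixE K A₁ A₂ (t₁ p.1 ⊗ₜ[K] t₂ p.2))) - x ⊗ₜ[K] y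
        ∈ relJ (Algebra.TensorProduct.map f₁ f₂) := by
  intro x y
  induction x using TensorProduct.induction_on with
  | zero => simp [rmulT_zero]
  | add x x' hx hx' =>
      have e : (∑ p : Fin N × Fin M, rmulT ((TensorProduct.map (β₁ p.1) (β₂ p.2)) (x + x') * y)
            (mixE K A₁ A₂ (t₁ p.1 ⊗ₜ[K] t₂ p.2))) - (x + x') ⊗ₜ[K] y
          = ((∑ p : Fin N × Fin M, rmulT ((TensorProduct.map (β₁ p.1) (β₂ p.2)) x * y)
              (mixE K A₁ A₂ (t₁ p.1 ⊗ₜ[K] t₂ p.2))) - x ⊗ₜ[K] y)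
            + ((∑ p : Fin N × Fin M, rmulT ((TensorProduct.map (β₁ p.1) (β₂ p.2)) x' * y)
              (mixE K A₁ A₂ (t₁ p.1 ⊗ₜ[K] t₂ p.2))) - x' ⊗ₜ[K] y) := by
        simp only [map_add, add_mul, rmulT_add, LinearMap.add_apply, TensorProduct.add_tmul,
          Finset.sum_add_distrib]
        abel
      rw [e]
      exact add_mem hx hx'
  | tmul x₁ x₂ =>
      induction y using TensorProduct.induction_on with
      | zero => simp [rmulT_zero]
      | add y y' hy hy' =>
          have e : (∑ p : Fin N × Fin M,
                rmulT ((TensorProduct.map (β₁ p.1) (β₂ p.2)) (x₁ ⊗ₜ[K] x₂) * (y + y'))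
                  (mixE K A₁ A₂ (t₁ p.1 ⊗ₜ[K] t₂ p.2))) - (x₁ ⊗ₜ[K] x₂) ⊗ₜ[K] (y + y')
              = ((∑ p : Fin N × Fin M,
                  rmulT ((TensorProduct.map (β₁ p.1) (β₂ p.2)) (x₁ ⊗ₜ[K] x₂) * y)
                    (mixE K A₁ A₂ (t₁ p.1 ⊗ₜ[K] t₂ p.2))) - (x₁ ⊗ₜ[K] x₂) ⊗ₜ[K] y)
                + ((∑ p : Fin N × Fin M,
                  rmulT ((TensorProduct.map (β₁ p.1) (β₂ p.2)) (x₁ ⊗ₜ[K] x₂) * y')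
                    (mixE K A₁ A₂ (t₁ p.1 ⊗ₜ[K] t₂ p.2))) - (x₁ ⊗ₜ[K] x₂) ⊗ₜ[K] y') := by
            simp only [mul_add, rmulT_add, LinearMap.add_apply,
              TensorProduct.tmul_add, Finset.sum_add_distrib]
            abel
          rw [e]
          exact add_mem hy hy'
      | tmul y₁ y₂ =>
          have step : ∀ p : Fin N × Fin M,
              rmulT ((TensorProduct.map (β₁ p.1) (β₂ p.2)) (x₁ ⊗ₜ[K] x₂) * (y₁ ⊗ₜ[K] y₂))
                  (mixE K A₁ A₂ (t₁ p.1 ⊗ₜ[K] t₂ p.2))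
                = mixE K A₁ A₂ ((rmulT (β₁ p.1 x₁ * y₁) (t₁ p.1))
                    ⊗ₜ[K] (rmulT (β₂ p.2 x₂ * y₂) (t₂ p.2))) := by
            intro p
            rw [TensorProduct.map_tmul, Algebra.TensorProduct.tmul_mul_tmul,
              ← mix_map_rmulT, TensorProduct.map_tmul]
          rw [Finset.sum_congr rfl (fun p _ => step p), ← Finset.univ_product_univ,
            Finset.sum_product]
          have e2 : mixE K A₁ A₂ ((∑ i, rmulT (β₁ i x₁ * y₁) (t₁ i))
                ⊗ₜ[K] (∑ j, rmulT (β₂ j x₂ * y₂) (t₂ j)))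
              = ∑ i, ∑ j, mixE K A₁ A₂ ((rmulT (β₁ i x₁ * y₁) (t₁ i))
                  ⊗ₜ[K] (rmulT (β₂ j x₂ * y₂) (t₂ j))) := by
            rw [TensorProduct.sum_tmul, map_sum]
            exact Finset.sum_congr rfl (fun i _ => by rw [TensorProduct.tmul_sum, map_sum])
          rw [← e2]
          have d : mixE K A₁ A₂ ((∑ i, rmulT (β₁ i x₁ * y₁) (t₁ i))
                ⊗ₜ[K] (∑ j, rmulT (β₂ j x₂ * y₂) (t₂ j)))
              - (x₁ ⊗ₜ[K] x₂) ⊗ₜ[K] (y₁ ⊗ₜ[K] y₂)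
              = mixE K A₁ A₂ (((∑ i, rmulT (β₁ i x₁ * y₁) (t₁ i)) - x₁ ⊗ₜ[K] y₁)
                  ⊗ₜ[K] (∑ j, rmulT (β₂ j x₂ * y₂) (t₂ j)))
                + mixE K A₁ A₂ ((x₁ ⊗ₜ[K] y₁)
                  ⊗ₜ[K] ((∑ j, rmulT (β₂ j x₂ * y₂) (t₂ j)) - x₂ ⊗ₜ[K] y₂)) := by
            rw [TensorProduct.sub_tmul, TensorProduct.tmul_sub, map_sub, map_sub, mixE_tmul]
            abel
          rw [d]
          exact add_mem (mixJ₁ f₁ f₂ (H₁ x₁ y₁) _) (mixJ₂ f₁ f₂ _ (H₂ x₂ y₂))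

end Assembly

/-- let `B_k → A_k` be homomorphisms of finite-dimensional algebras over a
field `K` with each `B_k` separable, and let `A = A₁ ⊗ A₂`, `B = B₁ ⊗ B₂`.  If each
`A_k | B_k` is depth two then so is `A | B`; moreover quasibases for `A | B` are obtained
as tensor products of quasibases of the factors. -/
theorem tensorProduct_d2 (K : Type*) [Field K]
    (A₁ A₂ B₁ B₂ : Type*) [Ring A₁] [Ring A₂] [Ring B₁] [Ring B₂]
    [Algebra K A₁] [Algebra K A₂] [Algebra K B₁] [Algebra K B₂]
    [FiniteDimensional K A₁] [FiniteDimensional K A₂]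
    [FiniteDimensional K B₁] [FiniteDimensional K B₂]
    (hB₁ : IsSepAlg K B₁) (hB₂ : IsSepAlg K B₂)
    (f₁ : B₁ →ₐ[K] A₁) (f₂ : B₂ →ₐ[K] A₂)
    (h₁ : LeftD2 f₁ ∧ RightD2 f₁) (h₂ : LeftD2 f₂ ∧ RightD2 f₂) :
    letI f := Algebra.TensorProduct.map f₁ f₂
    letI mix : ((A₁ ⊗[K] A₁) ⊗[K] (A₂ ⊗[K] A₂)) →ₗ[K]
        ((A₁ ⊗[K] A₂) ⊗[K] (A₁ ⊗[K] A₂)) :=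
      (TensorProduct.tensorTensorTensorComm K A₁ A₁ A₂ A₂).toLinearMap
    -- `A | B` is depth two
    ((LeftD2 f ∧ RightD2 f) ∧
    -- tensor products of right quasibases are right quasibases
    (∀ (N M : ℕ) (γ₁ : Fin N → (A₁ →ₗ[K] A₁)) (u₁ : Fin N → A₁ ⊗[K] A₁)
        (γ₂ : Fin M → (A₂ →ₗ[K] A₂)) (u₂ : Fin M → A₂ ⊗[K] A₂),
      IsRightQB f₁ γ₁ u₁ → IsRightQB f₂ γ₂ u₂ →
        IsRightQB f (fun p : Fin N × Fin M => TensorProduct.map (γ₁ p.1) (γ₂ p.2))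
          (fun p : Fin N × Fin M => mix ((u₁ p.1) ⊗ₜ[K] (u₂ p.2)))) ∧
    -- tensor products of left quasibases are left quasibases
    (∀ (N M : ℕ) (β₁ : Fin N → (A₁ →ₗ[K] A₁)) (t₁ : Fin N → A₁ ⊗[K] A₁)
        (β₂ : Fin M → (A₂ →ₗ[K] A₂)) (t₂ : Fin M → A₂ ⊗[K] A₂),
      IsLeftQB f₁ β₁ t₁ → IsLeftQB f₂ β₂ t₂ →
        IsLeftQB f (fun p : Fin N × Fin M => TensorProduct.map (β₁ p.1) (β₂ p.2))
          (fun p : Fin N × Fin M => mix ((t₁ p.1) ⊗ₜ[K] (t₂ p.2))))) := by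
  refine ⟨⟨leftD2_tensor f₁ f₂ h₁.1 h₂.1, rightD2_tensor f₁ f₂ h₁.2 h₂.2⟩, ?_, ?_⟩
  · intro N M γ₁ u₁ γ₂ u₂ hq₁ hq₂
    exact ⟨fun p => isBB_tensor f₁ f₂ (hq₁.1 p.1) (hq₂.1 p.2),
      fun p => isCent_tensor f₁ f₂ (hq₁.2.1 p.1) (hq₂.2.1 p.2),
      rightQB_sum f₁ f₂ γ₁ u₁ γ₂ u₂ hq₁.2.2 hq₂.2.2⟩
  · intro N M β₁ t₁ β₂ t₂ hq₁ hq₂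
    exact ⟨fun p => isBB_tensor f₁ f₂ (hq₁.1 p.1) (hq₂.1 p.2),
      fun p => isCent_tensor f₁ f₂ (hq₁.2.1 p.1) (hq₂.2.1 p.2),
      leftQB_sum f₁ f₂ β₁ t₁ β₂ t₂ hq₁.2.2 hq₂.2.2⟩

end
end

section
/- Let B ⊆ A be a subalgebra with A^S = B, where S = End(_B A _B). Then the right module A_B is balanced: every endomorphism f of A as a left module over E = End(A_B) is right multiplication by an element of B. -/
open TensorProduct LinearMap

noncomputable section

variable {K : Type*} [CommRing K] {A B : Type*} [Ring A] [Ring B] [Algebra K A] [Algebra K B]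

/-- let `B ⊆ A` be a subalgebra with `A^S = B` for `S = End(_B A _B)`.
Then `A_B` is balanced: every endomorphism of `A` as a left module over `E = End(A_B)`
is right multiplication by an element of `B`. -/
theorem balanced_of_invariants_eq (B : Subalgebra K A)
    (hAS : {x : A | ∀ α : A →ₗ[K] A, IsBB B.val α → α x = α 1 * x} = (B : Set A))
    (F : A →+ A)
    (hF : ∀ φ : A →ₗ[K] A, (∀ (x : A) (b : ↥B), φ (x * b) = φ x * b) →
      ∀ x, F (φ x) = φ (F x)) :
    ∃ b ∈ B, ∀ x, F x = x * b := by
  have key : ∀ a : A, F a = a * F 1 := by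
    intro a
    have := hF (mulLeft K a) (fun x b => (mul_assoc a x b).symm) 1
    simpa using this
  refine ⟨F 1, ?_, fun x => key x⟩
  have : F 1 ∈ (B : Set A) := by
    rw [← hAS]
    intro α hα
    have hαB : ∀ (x : A) (b : ↥B), α (x * b) = α x * b := fun x b => hα.2 b x
    have h1 := hF α hαB 1
    rw [← h1, key (α 1)]
  exact this

end
end

section
/- For a coalgebra homomorphism g : C → D over a field, the map α ↦ (α ⊗ id_C) ∘ Δ̲ is an isomorphism from End^{D-D}(C) (D-D-bicomodule endomorphisms of C) onto Hom^{D-C}(C, C □_D C) (D-C-bicomodule maps), with inverse F ↦ (id_C ⊗ ε) ∘ F. -/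
/-! Write `Ψ F = (id ⊗ ε) ∘ F`. Counitality gives `Ψ ((α ⊗ id) ∘ Δ) = α` for every `α`, and
coassociativity gives `(Ψ F ⊗ id) ∘ Δ = F` for every right `C`-colinear `F`, so the two maps
are mutually inverse once they map the two sets into each other. `Δ` lands in `C □_D C`, and
`α ⊗ id` preserves `C □_D C` when `α` is right `D`-colinear. Conversely, on `C □_D C` the right
`D`-coaction of `(id ⊗ ε) z` is `(id ⊗ g) z`; this is what makes `Ψ F` right `D`-colinear. -/

open TensorProduct LinearMap Coalgebra

noncomputable section

variable {K : Type*} [Field K] {C D : Type*}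
  [AddCommGroup C] [Module K C] [Coalgebra K C]
  [AddCommGroup D] [Module K D] [Coalgebra K D]

/-- The left `D`-coaction `c ↦ g(c₍₁₎) ⊗ c₍₂₎` on `C` induced by `g : C → D`. -/
def coactL (g : C →ₗc[K] D) : C →ₗ[K] D ⊗[K] C :=
  rTensor C g.toLinearMap ∘ₗ comul

/-- The right `D`-coaction `c ↦ c₍₁₎ ⊗ g(c₍₂₎)` on `C` induced by `g : C → D`. -/
def coactR (g : C →ₗc[K] D) : C →ₗ[K] C ⊗[K] D :=
  lTensor C g.toLinearMap ∘ₗ comul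

/-- The cotensor product `C □_D C` as a subspace of `C ⊗ C`: the kernel of
`ρ^R ⊗ id - id ⊗ ρ^L : C ⊗ C → C ⊗ D ⊗ C`. -/
def cotensor (g : C →ₗc[K] D) : Submodule K (C ⊗[K] C) :=
  LinearMap.ker ((TensorProduct.assoc K C D C).toLinearMap ∘ₗ rTensor C (coactR g)
    - lTensor C (coactL g))

/-- `α : C → C` is a `D`-`D`-bicomodule endomorphism. -/
def IsDD (g : C →ₗc[K] D) (α : C →ₗ[K] C) : Prop :=
  coactL g ∘ₗ α = lTensor D α ∘ₗ coactL g ∧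
  coactR g ∘ₗ α = rTensor D α ∘ₗ coactR g

/-- `φ : C → C` is left `D`-colinear and right `C`-colinear. -/
def IsDC (g : C →ₗc[K] D) (φ : C →ₗ[K] C) : Prop :=
  coactL g ∘ₗ φ = lTensor D φ ∘ₗ coactL g ∧
  comul ∘ₗ φ = rTensor C φ ∘ₗ comul

/-- The left `D`-coaction on `C ⊗ C` (through its first tensorand). -/
def coactL2 (g : C →ₗc[K] D) : C ⊗[K] C →ₗ[K] D ⊗[K] (C ⊗[K] C) :=
  (TensorProduct.assoc K D C C).toLinearMap ∘ₗ rTensor C (coactL g)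

/-- `F : C → C ⊗ C` is a `D`-`C`-bicomodule map into `C □_D C`
(left `D`-colinear and right `C`-colinear). -/
def IsDChom (g : C →ₗc[K] D) (F : C →ₗ[K] C ⊗[K] C) : Prop :=
  coactL2 g ∘ₗ F = lTensor D F ∘ₗ coactL g ∧
  (TensorProduct.assoc K C C C).symm.toLinearMap ∘ₗ lTensor C comul ∘ₗ F =
    rTensor C F ∘ₗ comul

/-- `F : C → C ⊗ C` is a `D`-`D`-bicomodule map (for the left and right `D`-comodule
structures of the `C`-`C`-bicomodule `C ⊗ C`). -/
def IsDDhom (g : C →ₗc[K] D) (F : C →ₗ[K] C ⊗[K] C) : Prop :=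
  coactL2 g ∘ₗ F = lTensor D F ∘ₗ coactL g ∧
  ((TensorProduct.assoc K C C D).symm.toLinearMap ∘ₗ lTensor C (coactR g)) ∘ₗ F =
    rTensor D F ∘ₗ coactR g

/-- The convolution product on `C* = Hom(C, K)`. -/
def conv (p q : C →ₗ[K] K) : C →ₗ[K] K :=
  (TensorProduct.lid K K).toLinearMap ∘ₗ TensorProduct.map p q ∘ₗ comul

/-- The centralizer `V_{C*}(D*)` of `g*(D*)` in the convolution algebra `C*`. -/
def Vcent (g : C →ₗc[K] D) : Set (C →ₗ[K] K) :=
  {p | ∀ d : D →ₗ[K] K, conv p (d ∘ₗ g.toLinearMap) = conv (d ∘ₗ g.toLinearMap) p}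

/-- `η` represents an element of `(C □_D C)^{* D*}`, i.e. a `D*`-central functional on
the cotensor product: `g(c₍₁₎) η(c₍₂₎ ⊗ c') = η(c ⊗ c'₍₁₎) g(c'₍₂₎)` on `C □_D C`. -/
def IsEtaInv (g : C →ₗc[K] D) (η : C ⊗[K] C →ₗ[K] K) : Prop :=
  ∀ z ∈ cotensor g,
    ((TensorProduct.rid K D).toLinearMap ∘ₗ TensorProduct.map g.toLinearMap η ∘ₗ
      (TensorProduct.assoc K C C C).toLinearMap ∘ₗ rTensor C comul) z =
    ((TensorProduct.lid K D).toLinearMap ∘ₗ TensorProduct.map η g.toLinearMap ∘ₗ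
      (TensorProduct.assoc K C C C).symm.toLinearMap ∘ₗ lTensor C comul) z

/-- The iterated comultiplication `c ↦ c₍₁₎ ⊗ (c₍₂₎ ⊗ c₍₃₎)`. -/
def comul2 : C →ₗ[K] C ⊗[K] (C ⊗[K] C) := lTensor C comul ∘ₗ comul

/-- The operator `c ⊗ c' ↦ η(c ⊗ c'₍₁₎) α(c'₍₂₎) ⊗ c'₍₃₎` on `C ⊗ C` built from a
quasibase pair `(η, α)`. -/
def quasiOp (η : C ⊗[K] C →ₗ[K] K) (α : C →ₗ[K] C) : C ⊗[K] C →ₗ[K] C ⊗[K] C :=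
  (TensorProduct.lid K (C ⊗[K] C)).toLinearMap ∘ₗ
    TensorProduct.map η (rTensor C α) ∘ₗ
    (TensorProduct.assoc K C C (C ⊗[K] C)).symm.toLinearMap ∘ₗ
    lTensor C comul2

/-- `g : C → D` is a left codepth two coalgebra homomorphism, expressed through the
existence of left coD2 quasibases `ηᵢ ∈ (C □_D C)^{* D*}`, `αᵢ ∈ End ᴰCᴰ` with
`c ⊗ c' = Σᵢ ηᵢ(c ⊗ c'₍₁₎) αᵢ(c'₍₂₎) ⊗ c'₍₃₎` on `C □_D C`  (equivalently, the
cotensor product `C □_D C` is a direct summand of a finite direct sum of copies of `C`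
as `D`-`C`-bicomodules). -/
def LeftCoD2 (g : C →ₗc[K] D) : Prop :=
  ∃ N : ℕ, 0 < N ∧ ∃ (η : Fin N → (C ⊗[K] C →ₗ[K] K)) (α : Fin N → (C →ₗ[K] C)),
    (∀ i, IsEtaInv g (η i)) ∧ (∀ i, IsDD g (α i)) ∧
    ∀ z ∈ cotensor g, ∑ i, quasiOp (η i) (α i) z = z

section Tensor

variable {R M N P Q : Type*} [CommSemiring R] [AddCommMonoid M] [Module R M]
  [AddCommMonoid N] [Module R N] [AddCommMonoid P] [Module R P] [AddCommMonoid Q] [Module R Q]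

lemma rTensor_lTensor_comm_apply (f : M →ₗ[R] P) (h : N →ₗ[R] Q) (z : M ⊗[R] N) :
    rTensor Q f (lTensor M h z) = lTensor P h (rTensor N f z) := by
  rw [← comp_apply, rTensor_comp_lTensor, ← lTensor_comp_rTensor, comp_apply]

end Tensor

section Contract

variable {R A M N : Type*} [CommSemiring R] [AddCommMonoid A] [Module R A] [Coalgebra R A]
  [AddCommMonoid M] [Module R M] [AddCommMonoid N] [Module R N]

variable (M) in
def contractCounit : M ⊗[R] A →ₗ[R] M :=
  (TensorProduct.rid R M).toLinearMap ∘ₗ lTensor M counit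

@[simp]
lemma contractCounit_tmul (m : M) (a : A) :
    contractCounit M (m ⊗ₜ[R] a) = (counit a : R) • m := rfl

lemma contractCounit_comp_comul : contractCounit A ∘ₗ comul = (LinearMap.id : A →ₗ[R] A) := by
  ext a
  simp [contractCounit]

lemma contractCounit_comp_rTensor (f : M →ₗ[R] N) :
    contractCounit N ∘ₗ rTensor A f = f ∘ₗ contractCounit M := by
  ext m a
  simp

lemma lTensor_contractCounit_comp_assoc :
    lTensor M (contractCounit N) ∘ₗ (TensorProduct.assoc R M N A).toLinearMap =
      contractCounit (M ⊗[R] N) := by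
  ext m n a
  simp [TensorProduct.tmul_smul]

lemma contractCounit_comp_rTensor_comp_comul (f : A →ₗ[R] M) :
    contractCounit M ∘ₗ rTensor A f ∘ₗ comul = f := by
  rw [← comp_assoc, contractCounit_comp_rTensor, comp_assoc, contractCounit_comp_comul, comp_id]

lemma rTensor_contractCounit_comp_assoc_symm_comp_lTensor_comul :
    rTensor A (contractCounit M) ∘ₗ (TensorProduct.assoc R M A A).symm.toLinearMap ∘ₗ
      lTensor M comul = (LinearMap.id : M ⊗[R] A →ₗ[R] M ⊗[R] A) := by
  have h : rTensor A (contractCounit M) ∘ₗ (TensorProduct.assoc R M A A).symm.toLinearMap =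
      lTensor M ((TensorProduct.lid R A).toLinearMap ∘ₗ rTensor A counit) := by
    ext m a b
    simp [TensorProduct.smul_tmul]
  rw [← comp_assoc, h, ← lTensor_comp, comp_assoc, rTensor_counit_comp_comul]
  ext m a
  simp

lemma rTensor_contractCounit_comp_comul {F : A →ₗ[R] M ⊗[R] A}
    (hF : (TensorProduct.assoc R M A A).symm.toLinearMap ∘ₗ lTensor M comul ∘ₗ F =
      rTensor A F ∘ₗ comul) :
    rTensor A (contractCounit M ∘ₗ F) ∘ₗ comul = F :=
  calc rTensor A (contractCounit M ∘ₗ F) ∘ₗ comul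
      = rTensor A (contractCounit M) ∘ₗ rTensor A F ∘ₗ comul := by rw [rTensor_comp, comp_assoc]
    _ = (rTensor A (contractCounit M) ∘ₗ (TensorProduct.assoc R M A A).symm.toLinearMap ∘ₗ
          lTensor M comul) ∘ₗ F := by rw [← hF]; rfl
    _ = F := by rw [rTensor_contractCounit_comp_assoc_symm_comp_lTensor_comul, id_comp]

lemma coassoc_symm_rTensor (f : A →ₗ[R] M) :
    (TensorProduct.assoc R M A A).symm.toLinearMap ∘ₗ lTensor M comul ∘ₗ rTensor A f ∘ₗ comul =
      rTensor A (rTensor A f ∘ₗ comul) ∘ₗ comul := by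
  simp only [coassoc_simps]

end Contract

section Coaction

variable (g : C →ₗc[K] D)

lemma mem_cotensor_iff {z : C ⊗[K] C} :
    z ∈ cotensor g ↔
      TensorProduct.assoc K C D C (rTensor C (coactR g) z) = lTensor C (coactL g) z := by
  simp only [cotensor, LinearMap.mem_ker, LinearMap.sub_apply, comp_apply, LinearEquiv.coe_coe,
    sub_eq_zero]

lemma comul_mem_cotensor (c : C) : comul c ∈ cotensor g := by
  have h : (TensorProduct.assoc K C D C).toLinearMap ∘ₗ rTensor C (coactR g) ∘ₗ comul =
      lTensor C (coactL g) ∘ₗ comul := by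
    simp only [coactR, coactL, coassoc_simps]
  exact (mem_cotensor_iff g).2 congr($h c)

lemma rTensor_mem_cotensor {α : C →ₗ[K] C} (hα : coactR g ∘ₗ α = rTensor D α ∘ₗ coactR g)
    {z : C ⊗[K] C} (hz : z ∈ cotensor g) : rTensor C α z ∈ cotensor g := by
  have hassoc : (TensorProduct.assoc K C D C).toLinearMap ∘ₗ rTensor C (rTensor D α) =
      rTensor (D ⊗[K] C) α ∘ₗ (TensorProduct.assoc K C D C).toLinearMap := by
    simp only [coassoc_simps]
  rw [mem_cotensor_iff] at hz ⊢
  calc TensorProduct.assoc K C D C (rTensor C (coactR g) (rTensor C α z))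
      = rTensor (D ⊗[K] C) α (TensorProduct.assoc K C D C (rTensor C (coactR g) z)) := by
        rw [← rTensor_comp_apply, hα, rTensor_comp_apply]
        exact congr($hassoc _)
    _ = lTensor C (coactL g) (rTensor C α z) := by rw [hz, rTensor_lTensor_comm_apply]

lemma contractCounit_comp_coactL : contractCounit D ∘ₗ coactL g = g.toLinearMap :=
  contractCounit_comp_rTensor_comp_comul _

lemma coactR_contractCounit_of_mem_cotensor {z : C ⊗[K] C} (hz : z ∈ cotensor g) :
    coactR g (contractCounit C z) = lTensor C g.toLinearMap z := by
  have h : coactR g ∘ₗ contractCounit C = lTensor C (contractCounit D) ∘ₗ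
      (TensorProduct.assoc K C D C).toLinearMap ∘ₗ rTensor C (coactR g) := by
    rw [← comp_assoc, lTensor_contractCounit_comp_assoc, contractCounit_comp_rTensor]
  calc coactR g (contractCounit C z)
      = lTensor C (contractCounit D) (TensorProduct.assoc K C D C (rTensor C (coactR g) z)) :=
        congr($h z)
    _ = lTensor C g.toLinearMap z := by
        rw [(mem_cotensor_iff g).1 hz, ← lTensor_comp_apply, contractCounit_comp_coactL]

lemma coactL2_comp_comul : coactL2 g ∘ₗ comul = lTensor D comul ∘ₗ coactL g := by
  simp only [coactL2, coactL, coassoc_simps]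

lemma coactL2_comp_rTensor {α : C →ₗ[K] C} (hα : coactL g ∘ₗ α = lTensor D α ∘ₗ coactL g) :
    coactL2 g ∘ₗ rTensor C α = lTensor D (rTensor C α) ∘ₗ coactL2 g := by
  rw [coactL2, comp_assoc, ← rTensor_comp, hα, rTensor_comp, ← comp_assoc,
    ← lTensor_rTensor_comp_assoc, comp_assoc]

lemma coactL_comp_contractCounit :
    coactL g ∘ₗ contractCounit C = lTensor D (contractCounit C) ∘ₗ coactL2 g := by
  rw [coactL2, ← comp_assoc, lTensor_contractCounit_comp_assoc, contractCounit_comp_rTensor]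

lemma isDChom_rTensor_comp_comul {α : C →ₗ[K] C} (hα : IsDD g α) :
    IsDChom g (rTensor C α ∘ₗ comul) ∧ ∀ c, (rTensor C α ∘ₗ comul) c ∈ cotensor g := by
  refine ⟨⟨?_, coassoc_symm_rTensor α⟩,
    fun c => rTensor_mem_cotensor g hα.2 (comul_mem_cotensor g c)⟩
  rw [← comp_assoc, coactL2_comp_rTensor g hα.1, comp_assoc, coactL2_comp_comul, lTensor_comp,
    comp_assoc]

lemma isDD_contractCounit_comp {F : C →ₗ[K] C ⊗[K] C} (hF : IsDChom g F)
    (hmem : ∀ c, F c ∈ cotensor g) : IsDD g (contractCounit C ∘ₗ F) := by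
  refine ⟨?_, ?_⟩
  · rw [← comp_assoc, coactL_comp_contractCounit, comp_assoc, hF.1, ← comp_assoc, ← lTensor_comp]
  · ext c
    have hc : rTensor C (contractCounit C ∘ₗ F) (comul c) = F c :=
      congr($(rTensor_contractCounit_comp_comul hF.2) c)
    calc coactR g (contractCounit C (F c))
        = lTensor C g.toLinearMap (F c) := coactR_contractCounit_of_mem_cotensor g (hmem c)
      _ = rTensor D (contractCounit C ∘ₗ F) (coactR g c) := by
        rw [← hc, coactR, comp_apply, rTensor_lTensor_comm_apply]

end Coaction

/-- for a coalgebra homomorphism `g : C → D` over a field, the map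
`α ↦ (α ⊗ id) ∘ Δ̲` is an isomorphism from `End ᴰCᴰ` onto `Hom ᴰ⁻ᶜ(C, C □_D C)`, with
inverse `F ↦ (id ⊗ ε) ∘ F`. -/
theorem endDD_iso_homDC (g : C →ₗc[K] D) :
    letI Φ : (C →ₗ[K] C) → (C →ₗ[K] C ⊗[K] C) := fun α => rTensor C α ∘ₗ comul
    letI Ψ : (C →ₗ[K] C ⊗[K] C) → (C →ₗ[K] C) := fun F =>
      (TensorProduct.rid K C).toLinearMap ∘ₗ lTensor C (counit (R := K) (A := C)) ∘ₗ F
    (Set.BijOn Φ {α | IsDD g α} {F | IsDChom g F ∧ ∀ c, F c ∈ cotensor g} ∧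
      Set.InvOn Ψ Φ {α | IsDD g α} {F | IsDChom g F ∧ ∀ c, F c ∈ cotensor g}) := by
  have hinv : Set.InvOn (fun F => contractCounit C ∘ₗ F) (fun α => rTensor C α ∘ₗ comul)
      {α | IsDD g α} {F | IsDChom g F ∧ ∀ c, F c ∈ cotensor g} :=
    ⟨fun α _ => contractCounit_comp_rTensor_comp_comul α,
      fun F hF => rTensor_contractCounit_comp_comul hF.1.2⟩
  exact ⟨hinv.bijOn (fun α hα => isDChom_rTensor_comp_comul g hα)
    (fun F hF => isDD_contractCounit_comp g hF.1 hF.2), hinv⟩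

end
end

section
/- For a coalgebra homomorphism g : C → D over a field, the map f ↦ ε ∘ f is an algebra anti-isomorphism from End^{D-C}(C), the endomorphisms of C that are left D-colinear and right C-colinear, onto the centralizer V_{C*}(D*) = {c* ∈ C* : c* · g*(d*) = g*(d*) · c* for all d* ∈ D*} inside the convolution algebra C*, with inverse c* ↦ (c ↦ c*(c₍₁₎) c₍₂₎). -/
open TensorProduct LinearMap Coalgebra

noncomputable section

variable {K : Type*} [Field K] {C D : Type*}
  [AddCommGroup C] [Module K C] [Coalgebra K C]
  [AddCommGroup D] [Module K D] [Coalgebra K D]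

section Aux

variable (g : C →ₗc[K] D)

private lemma dual_ext {x y : D} (h : ∀ d : Module.Dual K D, d x = d y) : x = y := by
  rw [← sub_eq_zero, ← Module.forall_dual_apply_eq_zero_iff K (x - y)]
  intro f
  simp [h f]

/-- `θ (ξ p) = p` for every `p`. -/
private lemma theta_xi (p : C →ₗ[K] K) :
    counit ∘ₗ ((TensorProduct.lid K C).toLinearMap ∘ₗ rTensor C p ∘ₗ comul) = p := by
  ext c
  have h1 : ∀ t : C ⊗[K] C,
      counit (TensorProduct.lid K C (rTensor C p t)) =
        TensorProduct.lid K K (rTensor K p (lTensor C (counit (R := K) (A := C)) t)) := by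
    intro t
    induction t using TensorProduct.induction_on with
    | zero => simp
    | tmul a b => simp
    | add x y hx hy => simp only [map_add, hx, hy]
  simp only [coe_comp, Function.comp_apply, LinearEquiv.coe_coe]
  rw [h1, lTensor_counit_comul]
  simp

/-- `ξ (θ φ) = φ` for right `C`-colinear `φ`. -/
private lemma xi_theta (φ : C →ₗ[K] C) (h2 : comul ∘ₗ φ = rTensor C φ ∘ₗ comul) :
    (TensorProduct.lid K C).toLinearMap ∘ₗ rTensor C (counit ∘ₗ φ) ∘ₗ comul = φ := by
  ext c
  have h := LinearMap.congr_fun h2 c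
  simp only [coe_comp, Function.comp_apply] at h
  simp only [coe_comp, Function.comp_apply, LinearEquiv.coe_coe, rTensor_comp, ← h]
  rw [rTensor_counit_comul]
  simp

private lemma lid_map_counit_left (q : C →ₗ[K] K) (x : C) :
    TensorProduct.lid K K (TensorProduct.map (counit (R := K) (A := C)) q (comul x)) = q x := by
  rw [← lTensor_comp_rTensor, coe_comp, Function.comp_apply, rTensor_counit_comul]
  simp

private lemma lid_map_counit_right (q : C →ₗ[K] K) (x : C) :
    TensorProduct.lid K K (TensorProduct.map q (counit (R := K) (A := C)) (comul x)) = q x := by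
  rw [← rTensor_comp_lTensor, coe_comp, Function.comp_apply, lTensor_counit_comul]
  simp

/-- `conv (θ ψ) q = q ∘ ψ` for right `C`-colinear `ψ`. -/
private lemma conv_theta_right (ψ : C →ₗ[K] C) (h2 : comul ∘ₗ ψ = rTensor C ψ ∘ₗ comul)
    (q : C →ₗ[K] K) : conv (counit ∘ₗ ψ) q = q ∘ₗ ψ := by
  ext c
  have h := LinearMap.congr_fun h2 c
  simp only [coe_comp, Function.comp_apply] at h
  have hA : TensorProduct.map ((counit : C →ₗ[K] K) ∘ₗ ψ) q =
      TensorProduct.map (counit (R := K) (A := C)) q ∘ₗ rTensor C ψ := by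
    apply TensorProduct.ext'
    intro a b
    simp
  simp only [conv, coe_comp, Function.comp_apply, LinearEquiv.coe_coe]
  rw [hA, coe_comp, Function.comp_apply, ← h, lid_map_counit_left]

/-- `conv q' (θ φ) = q' ∘ φ` for left `D`-colinear `φ` and `q' = d ∘ g`. -/
private lemma conv_theta_left (φ : C →ₗ[K] C)
    (h1 : coactL g ∘ₗ φ = lTensor D φ ∘ₗ coactL g) (d : D →ₗ[K] K) :
    conv (d ∘ₗ g.toLinearMap) (counit ∘ₗ φ) = (d ∘ₗ g.toLinearMap) ∘ₗ φ := by
  ext c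
  have h := LinearMap.congr_fun h1 c
  simp only [coactL, coe_comp, Function.comp_apply] at h
  have hA : TensorProduct.map (d ∘ₗ g.toLinearMap) ((counit : C →ₗ[K] K) ∘ₗ φ) =
      TensorProduct.map d (counit (R := K) (A := C)) ∘ₗ
        (lTensor D φ ∘ₗ rTensor C g.toLinearMap) := by
    apply TensorProduct.ext'
    intro a b
    simp
  have hB : TensorProduct.map d (counit (R := K) (A := C)) ∘ₗ rTensor C g.toLinearMap =
      TensorProduct.map (d ∘ₗ g.toLinearMap) (counit (R := K) (A := C)) := by
    apply TensorProduct.ext'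
    intro a b
    simp
  simp only [conv, coe_comp, Function.comp_apply, LinearEquiv.coe_coe]
  rw [hA, coe_comp, Function.comp_apply, coe_comp, Function.comp_apply, ← h,
    ← Function.comp_apply (f := TensorProduct.map d _) (g := rTensor C g.toLinearMap),
    ← coe_comp, hB, lid_map_counit_right]
  rfl

/-- `ξ p` is always right `C`-colinear. -/
private lemma xi_rightColinear (p : C →ₗ[K] K) :
    comul ∘ₗ ((TensorProduct.lid K C).toLinearMap ∘ₗ rTensor C p ∘ₗ comul) =
      rTensor C ((TensorProduct.lid K C).toLinearMap ∘ₗ rTensor C p ∘ₗ comul) ∘ₗ comul := by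
  ext c
  have Ga : ∀ t : C ⊗[K] C,
      comul (TensorProduct.lid K C (rTensor C p t)) =
        TensorProduct.lid K (C ⊗[K] C) (rTensor (C ⊗[K] C) p
          (lTensor C (comul (R := K) (A := C)) t)) := by
    intro t
    induction t using TensorProduct.induction_on with
    | zero => simp
    | tmul a b => simp
    | add x y hx hy => simp only [map_add, hx, hy]
  have Gb : ∀ s : (C ⊗[K] C) ⊗[K] C,
      TensorProduct.lid K (C ⊗[K] C) (rTensor (C ⊗[K] C) p
          (TensorProduct.assoc K C C C s)) =
        rTensor C ((TensorProduct.lid K C).toLinearMap ∘ₗ rTensor C p) s := by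
    intro s
    induction s using TensorProduct.induction_on with
    | zero => simp
    | tmul x c =>
      induction x using TensorProduct.induction_on with
      | zero => simp
      | tmul a b => simp [TensorProduct.smul_tmul']
      | add u v hu hv => simp only [TensorProduct.add_tmul, map_add, hu, hv]
    | add x y hx hy => simp only [map_add, hx, hy]
  simp only [coe_comp, Function.comp_apply, LinearEquiv.coe_coe]
  rw [Ga, ← coassoc_apply, Gb]
  simp only [rTensor_comp, coe_comp, Function.comp_apply]

/-- The two "spine" maps `C → D` associated to `p` agree after `Δ`, for `p ∈ Vcent g`. -/
private lemma central (p : C →ₗ[K] K) (hp : p ∈ Vcent g) :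
    ((TensorProduct.lid K D).toLinearMap ∘ₗ TensorProduct.map p g.toLinearMap) ∘ₗ comul =
      ((TensorProduct.rid K D).toLinearMap ∘ₗ TensorProduct.map g.toLinearMap p) ∘ₗ comul := by
  ext c
  apply dual_ext (K := K)
  intro d
  have e1 : d ∘ₗ ((TensorProduct.lid K D).toLinearMap ∘ₗ TensorProduct.map p g.toLinearMap) =
      (TensorProduct.lid K K).toLinearMap ∘ₗ TensorProduct.map p (d ∘ₗ g.toLinearMap) := by
    apply TensorProduct.ext'
    intro a b
    simp
  have e2 : d ∘ₗ ((TensorProduct.rid K D).toLinearMap ∘ₗ TensorProduct.map g.toLinearMap p) =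
      (TensorProduct.lid K K).toLinearMap ∘ₗ TensorProduct.map (d ∘ₗ g.toLinearMap) p := by
    apply TensorProduct.ext'
    intro a b
    simp [smul_eq_mul, mul_comm]
  have h := LinearMap.congr_fun (hp d) c
  simp only [conv, coe_comp, Function.comp_apply, LinearEquiv.coe_coe] at h
  have l1 := LinearMap.congr_fun e1 (comul c)
  have l2 := LinearMap.congr_fun e2 (comul c)
  simp only [coe_comp, Function.comp_apply, LinearEquiv.coe_coe] at l1 l2 ⊢
  rw [l1, l2, h]

/-- `ξ p` is left `D`-colinear for `p ∈ Vcent g`. -/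
private lemma xi_leftColinear (p : C →ₗ[K] K) (hp : p ∈ Vcent g) :
    coactL g ∘ₗ ((TensorProduct.lid K C).toLinearMap ∘ₗ rTensor C p ∘ₗ comul) =
      lTensor D ((TensorProduct.lid K C).toLinearMap ∘ₗ rTensor C p ∘ₗ comul) ∘ₗ coactL g := by
  set Bp : C ⊗[K] C →ₗ[K] D :=
    (TensorProduct.lid K D).toLinearMap ∘ₗ TensorProduct.map p g.toLinearMap with hBp
  set Bp' : C ⊗[K] C →ₗ[K] D :=
    (TensorProduct.rid K D).toLinearMap ∘ₗ TensorProduct.map g.toLinearMap p with hBp'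
  ext c
  have H1 : ∀ t : C ⊗[K] C,
      rTensor C g.toLinearMap (comul (TensorProduct.lid K C (rTensor C p t))) =
        TensorProduct.lid K (D ⊗[K] C) (rTensor (D ⊗[K] C) p
          (lTensor C (rTensor C g.toLinearMap ∘ₗ comul) t)) := by
    intro t
    induction t using TensorProduct.induction_on with
    | zero => simp
    | tmul a b => simp
    | add x y hx hy => simp only [map_add, hx, hy]
  have H2 : ∀ s : (C ⊗[K] C) ⊗[K] C,
      TensorProduct.lid K (D ⊗[K] C) (rTensor (D ⊗[K] C) p
          (lTensor C (rTensor C g.toLinearMap) (TensorProduct.assoc K C C C s))) =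
        rTensor C Bp s := by
    intro s
    induction s using TensorProduct.induction_on with
    | zero => simp
    | tmul x c =>
      induction x using TensorProduct.induction_on with
      | zero => simp
      | tmul a b => simp [hBp, TensorProduct.smul_tmul']
      | add u v hu hv => simp only [TensorProduct.add_tmul, map_add, hu, hv]
    | add x y hx hy => simp only [map_add, hx, hy]
  have H3 : ∀ t : C ⊗[K] C,
      lTensor D ((TensorProduct.lid K C).toLinearMap ∘ₗ rTensor C p ∘ₗ comul)
          (rTensor C g.toLinearMap t) =
        lTensor D ((TensorProduct.lid K C).toLinearMap ∘ₗ rTensor C p)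
          (rTensor (C ⊗[K] C) g.toLinearMap (lTensor C (comul (R := K) (A := C)) t)) := by
    intro t
    induction t using TensorProduct.induction_on with
    | zero => simp
    | tmul a b => simp
    | add x y hx hy => simp only [map_add, hx, hy]
  have H4 : ∀ s : (C ⊗[K] C) ⊗[K] C,
      lTensor D ((TensorProduct.lid K C).toLinearMap ∘ₗ rTensor C p)
          (rTensor (C ⊗[K] C) g.toLinearMap (TensorProduct.assoc K C C C s)) =
        rTensor C Bp' s := by
    intro s
    induction s using TensorProduct.induction_on with
    | zero => simp
    | tmul x c =>
      induction x using TensorProduct.induction_on with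
      | zero => simp
      | tmul a b => simp [hBp', TensorProduct.smul_tmul', TensorProduct.tmul_smul]
      | add u v hu hv => simp only [TensorProduct.add_tmul, map_add, hu, hv]
    | add x y hx hy => simp only [map_add, hx, hy]
  have key' : rTensor C Bp (rTensor C (comul (R := K) (A := C)) (comul c)) =
      rTensor C Bp' (rTensor C (comul (R := K) (A := C)) (comul c)) := by
    have e1 := LinearMap.congr_fun (rTensor_comp C Bp (comul (R := K) (A := C))).symm (comul c)
    have e2 := LinearMap.congr_fun (rTensor_comp C Bp' (comul (R := K) (A := C))).symm (comul c)
    simp only [coe_comp, Function.comp_apply] at e1 e2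
    rw [e1, e2, central g p hp]
  simp only [coactL, coe_comp, Function.comp_apply, LinearEquiv.coe_coe]
  rw [H1]
  have comp1 : lTensor C (rTensor C g.toLinearMap ∘ₗ comul) (comul c) =
      lTensor C (rTensor C g.toLinearMap) (lTensor C (comul (R := K) (A := C)) (comul c)) := by
    rw [lTensor_comp]
    rfl
  rw [comp1, ← coassoc_apply, H2, H3, ← coassoc_apply, H4]
  rw [key']

end Aux

/-- for a coalgebra homomorphism `g : C → D` over a field, `f ↦ ε ∘ f` is
an algebra anti-isomorphism from `End ᴰ⁻ᶜ(C)` (endomorphisms of `C` that are left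
`D`-colinear and right `C`-colinear) onto the centralizer `V_{C*}(D*)` in the
convolution algebra `C*`, with inverse `c* ↦ (c ↦ c*(c₍₁₎) c₍₂₎)`. -/
theorem endDC_anti_iso_centralizer (g : C →ₗc[K] D) :
    letI θ : (C →ₗ[K] C) → (C →ₗ[K] K) := fun φ => counit ∘ₗ φ
    letI ξ : (C →ₗ[K] K) → (C →ₗ[K] C) := fun p =>
      (TensorProduct.lid K C).toLinearMap ∘ₗ rTensor C p ∘ₗ comul
    (Set.BijOn θ {φ | IsDC g φ} (Vcent g) ∧
      Set.InvOn ξ θ {φ | IsDC g φ} (Vcent g) ∧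
      (∀ φ ψ : C →ₗ[K] C, IsDC g φ → IsDC g ψ →
        θ (φ ∘ₗ ψ) = conv (θ ψ) (θ φ)) ∧
      θ LinearMap.id = counit) := by
  have hMT : Set.MapsTo (fun φ : C →ₗ[K] C => (counit : C →ₗ[K] K) ∘ₗ φ)
      {φ | IsDC g φ} (Vcent g) := by
    intro φ hφ d
    rw [conv_theta_right φ hφ.2 (d ∘ₗ g.toLinearMap), conv_theta_left g φ hφ.1 d]
  have hMX : Set.MapsTo (fun p : C →ₗ[K] K =>
      (TensorProduct.lid K C).toLinearMap ∘ₗ rTensor C p ∘ₗ comul)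
      (Vcent g) {φ | IsDC g φ} := by
    intro p hp
    exact ⟨xi_leftColinear g p hp, xi_rightColinear p⟩
  have hInv : Set.InvOn (fun p : C →ₗ[K] K =>
      (TensorProduct.lid K C).toLinearMap ∘ₗ rTensor C p ∘ₗ comul)
      (fun φ : C →ₗ[K] C => (counit : C →ₗ[K] K) ∘ₗ φ) {φ | IsDC g φ} (Vcent g) := by
    constructor
    · intro φ hφ
      exact xi_theta φ hφ.2
    · intro p _
      exact theta_xi p
  refine ⟨hInv.bijOn hMT hMX, hInv, ?_, ?_⟩
  · intro φ ψ hφ hψ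
    rw [conv_theta_right ψ hψ.2 ((counit : C →ₗ[K] K) ∘ₗ φ)]
    rfl
  · exact LinearMap.comp_id _


end
end

section
/- Let g : C → D be a left codepth two coalgebra homomorphism over a field with quasibases η_i ∈ (C □_D C)*^{D*} and α_i ∈ End^{D-D}(C) satisfying c ⊗ c' = Σᵢ η_i(c ⊗ c'₍₁₎) α_i(c'₍₂₎) ⊗ c'₍₃₎ for all c ⊗ c' ∈ C □_D C. Then every β ∈ End^{D-D}(C) satisfies β(c) = Σᵢ η_i(β(c₍₁₎) ⊗ c₍₂₎) α_i(c₍₃₎); consequently E = End^{D-D}(C) is a finitely generated projective left module over R = V_{C*}(D*). -/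
open TensorProduct LinearMap Coalgebra

noncomputable section

variable {K : Type*} [Field K] {C D : Type*}
  [AddCommGroup C] [Module K C] [Coalgebra K C]
  [AddCommGroup D] [Module K D] [Coalgebra K D]

/-- The left action `(r · β)(c) = r(c₍₁₎) β(c₍₂₎)` of a functional `r ∈ C*` on
`End_K(C)`; for `r ∈ R = V_{C*}(D*)` this is the left `R`-module structure of
`E = End ᴰCᴰ`. -/
def lactC (r : C →ₗ[K] K) (β : C →ₗ[K] C) : C →ₗ[K] C :=
  (TensorProduct.lid K C).toLinearMap ∘ₗ TensorProduct.map r β ∘ₗ comul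


section GenHelpers
variable {K : Type*} [Field K] {M N P M' N' P' S : Type*}
  [AddCommGroup M] [Module K M] [AddCommGroup N] [Module K N]
  [AddCommGroup P] [Module K P] [AddCommGroup S] [Module K S]
  [AddCommGroup M'] [Module K M'] [AddCommGroup N'] [Module K N']
  [AddCommGroup P'] [Module K P']

lemma H1a (f : M →ₗ[K] M') (x : (M ⊗[K] N) ⊗[K] P) :
    TensorProduct.assoc K M' N P ((f.rTensor N).rTensor P x) =
      f.rTensor (N ⊗[K] P) (TensorProduct.assoc K M N P x) := by
  have h : (TensorProduct.assoc K M' N P).toLinearMap ∘ₗ (f.rTensor N).rTensor P =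
      f.rTensor (N ⊗[K] P) ∘ₗ (TensorProduct.assoc K M N P).toLinearMap := by
    ext m n p; simp
  simpa using LinearMap.congr_fun h x

lemma H2a (f : M →ₗ[K] M') (y : M ⊗[K] (N ⊗[K] P)) :
    (f.rTensor N).rTensor P ((TensorProduct.assoc K M N P).symm y) =
      (TensorProduct.assoc K M' N P).symm (f.rTensor (N ⊗[K] P) y) := by
  have h : (f.rTensor N).rTensor P ∘ₗ (TensorProduct.assoc K M N P).symm.toLinearMap =
      (TensorProduct.assoc K M' N P).symm.toLinearMap ∘ₗ f.rTensor (N ⊗[K] P) := by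
    ext m n p; simp
  simpa using LinearMap.congr_fun h y

lemma H4a (h : P →ₗ[K] P') (y : M ⊗[K] (N ⊗[K] P)) :
    (TensorProduct.assoc K M N P').symm ((h.lTensor N).lTensor M y) =
      h.lTensor (M ⊗[K] N) ((TensorProduct.assoc K M N P).symm y) := by
  have hh : (TensorProduct.assoc K M N P').symm.toLinearMap ∘ₗ (h.lTensor N).lTensor M =
      h.lTensor (M ⊗[K] N) ∘ₗ (TensorProduct.assoc K M N P).symm.toLinearMap := by
    ext m n p; simp
  simpa using LinearMap.congr_fun hh y

lemma H5a (f : M →ₗ[K] M') (v : K ⊗[K] M) :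
    TensorProduct.lid K M' (f.lTensor K v) = f (TensorProduct.lid K M v) := by
  have h : (TensorProduct.lid K M').toLinearMap ∘ₗ f.lTensor K =
      f ∘ₗ (TensorProduct.lid K M).toLinearMap := by ext m; simp
  simpa using LinearMap.congr_fun h v

lemma H7a (f : M →ₗ[K] M') (h : N →ₗ[K] N') (y : M ⊗[K] (N ⊗[K] P)) :
    TensorProduct.assoc K M' N' P
        ((map f h).rTensor P ((TensorProduct.assoc K M N P).symm y)) =
      map f (h.rTensor P) y := by
  have hh : (TensorProduct.assoc K M' N' P).toLinearMap ∘ₗ (map f h).rTensor P =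
      map f (h.rTensor P) ∘ₗ (TensorProduct.assoc K M N P).toLinearMap := by
    ext m n p; simp
  have := LinearMap.congr_fun hh ((TensorProduct.assoc K M N P).symm y)
  simpa using this

lemma H11a (h : N →ₗ[K] N') (x : (M ⊗[K] N) ⊗[K] P) :
    TensorProduct.assoc K M N' P ((h.lTensor M).rTensor P x) =
      (h.rTensor P).lTensor M (TensorProduct.assoc K M N P x) := by
  have hh : (TensorProduct.assoc K M N' P).toLinearMap ∘ₗ (h.lTensor M).rTensor P =
      (h.rTensor P).lTensor M ∘ₗ (TensorProduct.assoc K M N P).toLinearMap := by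
    ext m n p; simp
  simpa using LinearMap.congr_fun hh x

lemma commLR (f : M →ₗ[K] M') (h : N →ₗ[K] N') (x : M ⊗[K] N) :
    h.lTensor M' (f.rTensor N x) = f.rTensor N' (h.lTensor M x) := by
  rw [← comp_apply, ← comp_apply, lTensor_comp_rTensor, rTensor_comp_lTensor]

lemma mapcl (f : M →ₗ[K] M') (g : N →ₗ[K] N') (g' : S →ₗ[K] N) (x : M ⊗[K] S) :
    map f g (g'.lTensor M x) = map f (g ∘ₗ g') x := by
  rw [← comp_apply, map_comp_lTensor]

lemma mapcr (f : M →ₗ[K] M') (g : N →ₗ[K] N') (f' : S →ₗ[K] M) (x : S ⊗[K] N) :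
    map f g (f'.rTensor N x) = map (f ∘ₗ f') g x := by
  rw [← comp_apply, map_comp_rTensor]

lemma lmap (g' : N' →ₗ[K] S) (f : M →ₗ[K] M') (g : N →ₗ[K] N') (x : M ⊗[K] N) :
    g'.lTensor M' (map f g x) = map f (g' ∘ₗ g) x := by
  rw [← comp_apply, lTensor_comp_map]

lemma maplr (f : M →ₗ[K] M') (g : N →ₗ[K] N') (x : M ⊗[K] N) :
    map f g x = g.lTensor M' (f.rTensor N x) := by
  rw [← comp_apply, lTensor_comp_rTensor]

end GenHelpers

section MyAux
variable (g : C →ₗc[K] D)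

/-- `W = (id ⊗ ε)` collapsing the second tensorand. -/
def Wmap : C ⊗[K] C →ₗ[K] C :=
  (TensorProduct.rid K C).toLinearMap ∘ₗ lTensor C (counit (R := K))

lemma Wmap_comul (c : C) : Wmap (comul (R := K) c) = c := by
  simp [Wmap, lTensor_counit_comul]

lemma Wmap_rTensor (f : C →ₗ[K] C) (x : C ⊗[K] C) :
    Wmap (f.rTensor C x) = f (Wmap x) := by
  have h : (Wmap : C ⊗[K] C →ₗ[K] C) ∘ₗ f.rTensor C = f ∘ₗ Wmap := by
    ext a b; simp [Wmap]
  simpa using LinearMap.congr_fun h x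

lemma Wmap_comp (f : C →ₗ[K] C) :
    Wmap ∘ₗ (f.rTensor C ∘ₗ comul) = f := by
  ext c; simp [comp_apply, Wmap_rTensor, Wmap_comul]

lemma memCot {β : C →ₗ[K] C} (hβ : IsDD g β) (c : C) :
    β.rTensor C (comul (R := K) c) ∈ cotensor g := by
  rw [cotensor, LinearMap.mem_ker, LinearMap.sub_apply, sub_eq_zero]
  simp only [comp_apply, LinearEquiv.coe_coe]
  rw [← rTensor_comp_apply, hβ.2, rTensor_comp_apply, coactR, rTensor_comp_apply,
    ← coassoc_symm_apply, ← rTensor_comp_apply, rTensor_comp_lTensor, H7a,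
    maplr, commLR, ← lTensor_comp_apply, coactL]
  exact (commLR β _ _).symm

lemma Wq (η : C ⊗[K] C →ₗ[K] K) (α : C →ₗ[K] C) (x : C ⊗[K] C) :
    Wmap (quasiOp η α x) =
      TensorProduct.lid K C (map η α
        ((TensorProduct.assoc K C C C).symm ((comul (R := K)).lTensor C x))) := by
  simp only [quasiOp, comp_apply, LinearEquiv.coe_coe]
  rw [comul2, lTensor_comp_apply, H4a, mapcl, ← H5a, lmap]
  rw [show Wmap ∘ₗ (α.rTensor C ∘ₗ comul) = α from Wmap_comp α]

lemma key_term (η : C ⊗[K] C →ₗ[K] K) (α β : C →ₗ[K] C) (c : C) :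
    Wmap (quasiOp η α (β.rTensor C (comul (R := K) c))) =
      ((TensorProduct.lid K C).toLinearMap ∘ₗ map η α ∘ₗ
        (TensorProduct.assoc K C C C).symm.toLinearMap ∘ₗ
        β.rTensor (C ⊗[K] C) ∘ₗ comul2) c := by
  simp only [comp_apply, LinearEquiv.coe_coe]
  rw [Wq, commLR, comul2, comp_apply]

lemma part1 {Nn : ℕ} (η : Fin Nn → (C ⊗[K] C →ₗ[K] K)) (α : Fin Nn → (C →ₗ[K] C))
    (hqb : ∀ z ∈ cotensor g, ∑ i, quasiOp (η i) (α i) z = z)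
    (β : C →ₗ[K] C) (hβ : IsDD g β) :
    β = ∑ i, (TensorProduct.lid K C).toLinearMap ∘ₗ
        TensorProduct.map (η i) (α i) ∘ₗ
        (TensorProduct.assoc K C C C).symm.toLinearMap ∘ₗ
        rTensor (C ⊗[K] C) β ∘ₗ comul2 := by
  ext c
  have hz := hqb (β.rTensor C (comul c)) (memCot g hβ c)
  calc β c = Wmap (β.rTensor C (comul c)) := by rw [Wmap_rTensor, Wmap_comul]
    _ = Wmap (∑ i, quasiOp (η i) (α i) (β.rTensor C (comul c))) := by rw [hz]
    _ = ∑ i, Wmap (quasiOp (η i) (α i) (β.rTensor C (comul c))) := map_sum _ _ _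
    _ = _ := by
        rw [LinearMap.sum_apply]
        exact Finset.sum_congr rfl fun i _ => key_term (η i) (α i) β c

lemma part4term (η : C ⊗[K] C →ₗ[K] K) (α β : C →ₗ[K] C) :
    lactC (η ∘ₗ rTensor C β ∘ₗ comul) α =
      (TensorProduct.lid K C).toLinearMap ∘ₗ map η α ∘ₗ
        (TensorProduct.assoc K C C C).symm.toLinearMap ∘ₗ
        β.rTensor (C ⊗[K] C) ∘ₗ comul2 := by
  ext c
  simp only [lactC, comp_apply, LinearEquiv.coe_coe]
  rw [← mapcr, rTensor_comp_apply, ← coassoc_symm_apply, H2a, comul2, comp_apply]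

lemma part3 (η : C ⊗[K] C →ₗ[K] K) (r : C →ₗ[K] K) (β : C →ₗ[K] C) :
    η ∘ₗ rTensor C (lactC r β) ∘ₗ comul =
      conv r (η ∘ₗ rTensor C β ∘ₗ comul) := by
  have H8 : η ∘ₗ (TensorProduct.lid K C).toLinearMap.rTensor C ∘ₗ
        (map r β).rTensor C ∘ₗ (TensorProduct.assoc K C C C).symm.toLinearMap =
      (TensorProduct.lid K K).toLinearMap ∘ₗ map r η ∘ₗ (β.rTensor C).lTensor C := by
    ext a b c
    simp [← TensorProduct.smul_tmul', map_smul, smul_eq_mul]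
  ext c
  simp only [conv, comp_apply, LinearEquiv.coe_coe]
  rw [lactC, rTensor_comp_apply, rTensor_comp_apply, ← coassoc_symm_apply]
  have h8 := LinearMap.congr_fun H8 ((comul (R := K)).lTensor C (comul c))
  simp only [comp_apply, LinearEquiv.coe_coe] at h8
  rw [h8, ← lTensor_comp_apply, mapcl]

lemma part2star (η : C ⊗[K] C →ₗ[K] K) (hη : IsEtaInv g η)
    {β : C →ₗ[K] C} (hβ : IsDD g β) (c : C) :
    TensorProduct.rid K D (map g.toLinearMap (η ∘ₗ rTensor C β ∘ₗ comul)
        (comul (R := K) c)) =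
      TensorProduct.lid K D (map (η ∘ₗ rTensor C β ∘ₗ comul) g.toLinearMap
        (comul (R := K) c)) := by
  have E := hη (β.rTensor C (comul c)) (memCot g hβ c)
  simp only [comp_apply, LinearEquiv.coe_coe] at E
  conv at E =>
    rhs
    rw [commLR, ← H2a, coassoc_symm_apply, ← rTensor_comp_apply, mapcr]
  conv at E =>
    lhs
    rw [← rTensor_comp_apply, maplr, ← H1a, ← rTensor_comp_apply,
      show rTensor C g.toLinearMap ∘ₗ (comul ∘ₗ β) =
          lTensor D β ∘ₗ (rTensor C g.toLinearMap ∘ₗ comul) from by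
        rw [← comp_assoc, ← coactL, hβ.1, coactL],
      rTensor_comp_apply, rTensor_comp_apply, ← coassoc_symm_apply, H2a,
      ← commLR, H11a, LinearEquiv.apply_symm_apply, ← lTensor_comp_apply,
      ← lTensor_comp_apply, comp_assoc, ← maplr]
  exact E

lemma part2 (η : C ⊗[K] C →ₗ[K] K) (hη : IsEtaInv g η)
    {β : C →ₗ[K] C} (hβ : IsDD g β) :
    (η ∘ₗ rTensor C β ∘ₗ comul) ∈ Vcent g := by
  intro d
  have h13 : ∀ (q : C →ₗ[K] K) (x : C ⊗[K] C),
      TensorProduct.lid K K (map q (d ∘ₗ g.toLinearMap) x) =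
        d (TensorProduct.lid K D (map q g.toLinearMap x)) := by
    intro q x
    have h : (TensorProduct.lid K K).toLinearMap ∘ₗ map q (d ∘ₗ g.toLinearMap) =
        d ∘ₗ (TensorProduct.lid K D).toLinearMap ∘ₗ map q g.toLinearMap := by
      ext a b; simp
    simpa using LinearMap.congr_fun h x
  have h12 : ∀ (q : C →ₗ[K] K) (x : C ⊗[K] C),
      TensorProduct.lid K K (map (d ∘ₗ g.toLinearMap) q x) =
        d (TensorProduct.rid K D (map g.toLinearMap q x)) := by
    intro q x
    have h : (TensorProduct.lid K K).toLinearMap ∘ₗ map (d ∘ₗ g.toLinearMap) q =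
        d ∘ₗ (TensorProduct.rid K D).toLinearMap ∘ₗ map g.toLinearMap q := by
      ext a b; simp [smul_eq_mul, mul_comm]
    simpa using LinearMap.congr_fun h x
  ext c
  simp only [conv, comp_apply, LinearEquiv.coe_coe]
  rw [h13, h12]
  exact congrArg d (part2star g η hη hβ c).symm

end MyAux
/-- given left coD2 quasibases `ηᵢ, αᵢ` for `g : C → D`, every
`β ∈ E = End ᴰCᴰ` satisfies `β(c) = Σᵢ ηᵢ(β(c₍₁₎) ⊗ c₍₂₎) αᵢ(c₍₃₎)`; consequently `E`
is a finitely generated projective left module over `R = V_{C*}(D*)` — witnessed by the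
dual bases `Tᵢ : β ↦ ηᵢ(β(-₍₁₎) ⊗ -₍₂₎) ∈ R` and `αᵢ`. -/
theorem quasibases_dual_bases (g : C →ₗc[K] D) {N : ℕ}
    (η : Fin N → (C ⊗[K] C →ₗ[K] K)) (α : Fin N → (C →ₗ[K] C))
    (hη : ∀ i, IsEtaInv g (η i)) (hα : ∀ i, IsDD g (α i))
    (hqb : ∀ z ∈ cotensor g, ∑ i, quasiOp (η i) (α i) z = z) :
    letI T : Fin N → (C →ₗ[K] C) → (C →ₗ[K] K) := fun i β =>
      η i ∘ₗ rTensor C β ∘ₗ comul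
    -- the key identity `β(c) = Σᵢ ηᵢ(β(c₍₁₎) ⊗ c₍₂₎) αᵢ(c₍₃₎)`
    ((∀ β : C →ₗ[K] C, IsDD g β →
      β = ∑ i, (TensorProduct.lid K C).toLinearMap ∘ₗ
        TensorProduct.map (η i) (α i) ∘ₗ
        (TensorProduct.assoc K C C C).symm.toLinearMap ∘ₗ
        rTensor (C ⊗[K] C) β ∘ₗ comul2) ∧
    -- `T i β` lies in `R = V_{C*}(D*)` and `T i` is left `R`-linear
    (∀ β : C →ₗ[K] C, IsDD g β → ∀ i, T i β ∈ Vcent g) ∧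
    (∀ β : C →ₗ[K] C, IsDD g β → ∀ r ∈ Vcent g, ∀ i,
      T i (lactC r β) = conv r (T i β)) ∧
    -- the dual basis equation: `E` is f.g. projective as a left `R`-module
    (∀ β : C →ₗ[K] C, IsDD g β → β = ∑ i, lactC (T i β) (α i))) := by
  refine ⟨fun β hβ => part1 g η α hqb β hβ,
    fun β hβ i => part2 g (η i) (hη i) hβ,
    fun β hβ r _ i => part3 (η i) r β,
    fun β hβ => ?_⟩
  calc β = ∑ i, (TensorProduct.lid K C).toLinearMap ∘ₗ
        TensorProduct.map (η i) (α i) ∘ₗ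
        (TensorProduct.assoc K C C C).symm.toLinearMap ∘ₗ
        rTensor (C ⊗[K] C) β ∘ₗ comul2 := part1 g η α hqb β hβ
    _ = ∑ i, lactC (η i ∘ₗ rTensor C β ∘ₗ comul) (α i) :=
        Finset.sum_congr rfl fun i _ => (part4term (η i) (α i) β).symm

end
end
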